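/- arXiv:1007.1356 — 10 statements merged into one kernel-verified Lean document; each statement's English description precedes it below -/
import Mathlib

section
/- Let 𝓕 be a subgroup of the group of units of R, and let M be the A-submodule of R generated by 𝓕 \ {1}. Assume: (a) for every a ∈ A with a ≠ 0 there exist real constants 0 < c ≤ C such that c ≤ |a(n)|_n ≤ C for all n ∈ ℕ; (b) for every f ∈ M and every free ultrafilter 𝔘 on ℕ (an ultrafilter containing no finite set), the sequence (|f(n)|_n)_{n∈ℕ} tends along 𝔘 either to 0 or to +∞. Then 𝓕 is subsequence-free over A. -/
open Filter

/-- A family `S` of elements of the product ring `∀ n, R n` is *subsequence-free* over the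
subring `A` if for every infinite subset `X ⊆ ℕ`, all pairwise distinct `f₁, …, f_r ∈ S` and
all `a₁, …, a_r ∈ A`, the relation `∑ j, a j n * f j n = 0` for all `n ∈ X` forces all the
`a j` to vanish. -/
def SubsequenceFree {R : ℕ → Type*} [∀ n, CommRing (R n)]
    (A : Subring (∀ n, R n)) (S : Set (∀ n, R n)) : Prop :=
  ∀ X : Set ℕ, X.Infinite → ∀ (r : ℕ) (f : Fin r → ∀ n, R n),
    (∀ j, f j ∈ S) → Function.Injective f →
    ∀ a : Fin r → ∀ n, R n, (∀ j, a j ∈ A) →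
    (∀ n ∈ X, ∑ j, a j n * f j n = 0) → ∀ j, a j = 0

/-- Lemma on subsequence-freeness via absolute values: if `𝓕` is a subgroup of the units of
`R = ∏ R n`, every nonzero element of `A` has coordinatewise absolute values bounded away
from `0` and `∞`, and every element of the `A`-submodule generated by `𝓕 \ {1}` tends, along
any free ultrafilter, either to `0` or to `+∞` in absolute value, then `𝓕` is
subsequence-free over `A`. -/
theorem subsequenceFree_of_absoluteValues
    {R : ℕ → Type*} [∀ n, CommRing (R n)] [∀ n, IsDomain (R n)]
    (v : ∀ n, AbsoluteValue (R n) ℝ)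
    (A : Subring (∀ n, R n)) (𝓕 : Subgroup (∀ n, R n)ˣ)
    (ha : ∀ a ∈ A, a ≠ (0 : ∀ n, R n) →
      ∃ c C : ℝ, 0 < c ∧ c ≤ C ∧ ∀ n, c ≤ v n (a n) ∧ v n (a n) ≤ C)
    (hb : ∀ f ∈ Submodule.span A
        ((((↑) : (∀ n, R n)ˣ → ∀ n, R n) '' (𝓕 : Set (∀ n, R n)ˣ)) \ {1}),
      ∀ 𝔘 : Ultrafilter ℕ, (∀ s : Set ℕ, s.Finite → s ∉ 𝔘) →
        Tendsto (fun n => v n (f n)) (𝔘 : Filter ℕ) (nhds 0) ∨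
        Tendsto (fun n => v n (f n)) (𝔘 : Filter ℕ) atTop) :
    SubsequenceFree A (((↑) : (∀ n, R n)ˣ → ∀ n, R n) '' (𝓕 : Set (∀ n, R n)ˣ)) := by
  intro X hX r f hf hinj a hA hsum j
  by_contra haj
  obtain ⟨c, C, hc, hcC, hbound⟩ := ha (a j) (hA j) haj
  choose F hF𝓕 hFeq using hf
  set w : ∀ n, R n := (((F j)⁻¹ : (∀ n, R n)ˣ) : ∀ n, R n) with hw
  set g : ∀ n, R n :=
    ∑ k ∈ Finset.univ.erase j, a k * (((F k * (F j)⁻¹ : (∀ n, R n)ˣ)) : ∀ n, R n) with hg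
  have hgmem : g ∈ Submodule.span A
      ((((↑) : (∀ n, R n)ˣ → ∀ n, R n) '' (𝓕 : Set (∀ n, R n)ˣ)) \ {1}) := by
    apply Submodule.sum_mem
    intro k hk
    have hrw : a k * (((F k * (F j)⁻¹ : (∀ n, R n)ˣ)) : ∀ n, R n)
        = (⟨a k, hA k⟩ : A) • (((F k * (F j)⁻¹ : (∀ n, R n)ˣ)) : ∀ n, R n) := rfl
    rw [hrw]
    apply Submodule.smul_mem
    apply Submodule.subset_span
    refine ⟨⟨_, 𝓕.mul_mem (hF𝓕 k) (𝓕.inv_mem (hF𝓕 j)), rfl⟩, ?_⟩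
    simp only [Set.mem_singleton_iff]
    intro h1
    have h2 : F k * (F j)⁻¹ = 1 := Units.ext (h1.trans Units.val_one.symm)
    rw [mul_inv_eq_one] at h2
    have hfk : f k = f j := by rw [← hFeq k, ← hFeq j, h2]
    exact (Finset.mem_erase.mp hk).1 (hinj hfk)
  have key : ∀ n ∈ X, g n = - a j n := by
    intro n hn
    have hfw : f j * w = 1 := by
      rw [← hFeq j, hw]; exact_mod_cast Units.mul_inv (F j)
    have hjw : f j n * w n = 1 := by
      have := congrFun hfw n; simpa using this
    have h1 : ∑ k, a k n * (f k n * w n) = 0 := by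
      have h0 : (∑ k, a k n * f k n) * w n = 0 := by rw [hsum n hn, zero_mul]
      rw [Finset.sum_mul] at h0
      simpa [mul_assoc] using h0
    have hgn : g n = ∑ k ∈ Finset.univ.erase j, a k n * (f k n * w n) := by
      rw [hg, Finset.sum_apply]
      refine Finset.sum_congr rfl fun k _ => ?_
      simp [Pi.mul_apply, Units.val_mul, ← hFeq k, hw, mul_assoc]
    have hsplit : g n + a j n * (f j n * w n) = 0 := by
      rw [hgn, Finset.sum_erase_add _ _ (Finset.mem_univ j)]
      exact h1
    rw [hjw, mul_one] at hsplit
    exact eq_neg_of_add_eq_zero_left hsplit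
  have hgb : ∀ n ∈ X, c ≤ v n (g n) ∧ v n (g n) ≤ C := by
    intro n hn
    rw [key n hn, (v n).map_neg]
    exact hbound n
  haveI hne : (cofinite ⊓ 𝓟 X : Filter ℕ).NeBot := by
    rw [Filter.inf_principal_neBot_iff]
    intro U hU
    obtain ⟨x, hx⟩ := (hX.diff (Filter.mem_cofinite.mp hU)).nonempty
    exact ⟨x, not_not.mp hx.2, hx.1⟩
  set 𝔘 : Ultrafilter ℕ := Ultrafilter.of (cofinite ⊓ 𝓟 X) with h𝔘
  have hle : (𝔘 : Filter ℕ) ≤ cofinite ⊓ 𝓟 X := Ultrafilter.of_le _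
  have hXmem : X ∈ 𝔘 := hle (mem_inf_of_right (mem_principal_self X))
  have hfree : ∀ s : Set ℕ, s.Finite → s ∉ 𝔘 := by
    intro s hs hmem
    have hcompl : sᶜ ∈ 𝔘 := hle (mem_inf_of_left (by simpa using hs))
    exact (Ultrafilter.compl_notMem_iff.mpr hmem) hcompl
  have hXev : ∀ᶠ n in (𝔘 : Filter ℕ), n ∈ X := hXmem
  rcases hb g hgmem 𝔘 hfree with hT | hT
  · have h1 : ∀ᶠ n in (𝔘 : Filter ℕ), v n (g n) < c :=
      hT.eventually (tendsto_id.eventually_lt_const hc)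
    obtain ⟨n, hn1, hn2⟩ := (h1.and hXev).exists
    exact absurd (hgb n hn2).1 (not_le.mpr hn1)
  · have h1 : ∀ᶠ n in (𝔘 : Filter ℕ), C + 1 ≤ v n (g n) := hT.eventually_ge_atTop (C + 1)
    obtain ⟨n, hn1, hn2⟩ := (h1.and hXev).exists
    linarith [(hgb n hn2).2]
end

section
/- Let (λ_n)_{n∈ℕ} be such that λ_n is a unit of R_n for every n. Assume: (a) for every a ∈ A with a ≠ 0 there exist real constants 0 < c ≤ C with c ≤ |a(n)|_n ≤ C for all n; (b) there is ε > 0 with |λ_n|_n ≥ 1 + ε for all n. Let (f_i)_{i∈I} be a family of integer sequences such that every nonzero element g of the ℤ-submodule of ℤ^ℕ spanned by the f_i takes each integer value only finitely often (equivalently |g(n)| → ∞). Then the map g ↦ F_g := (λ_n^{g(n)})_{n∈ℕ} is an injective group homomorphism from the ℤ-span of the f_i into the units of R, so its image 𝓕 is a free abelian group, and moreover 𝓕 is subsequence-free over A: for every infinite X ⊆ ℕ, all pairwise distinct g_1,…,g_r in the ℤ-span of the f_i and all a_1,…,a_r ∈ A, if ∑_{j=1}^r a_j(n)·λ_n^{g_j(n)}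 = 0 for all n ∈ X, then a_1 = … = a_r = 0. -/
/-!
At a coordinate `n` where the exponents `g j n` are pairwise at least `N` apart, the term with
the largest exponent among those with nonzero coefficient has absolute value at least
`c |λ_n|^e`, while the other terms together have absolute value at most `r C |λ_n|^e / (1+ε)^N`;
for `N` large the sum therefore cannot vanish. Differences of distinct elements of the span tend
to infinity in absolute value, so all but finitely many coordinates are of this kind, and an
infinite `X` contains one of them.
-/

open Filter

namespace AbsoluteValue

variable {S : Type*} [Ring S] (v : AbsoluteValue S ℝ)

theorem sum_ne_zero_of_sum_erase_lt {ι : Type*} [DecidableEq ι] {s : Finset ι} {i : ι}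
    (hi : i ∈ s) (x : ι → S) (h : ∑ k ∈ s.erase i, v (x k) < v (x i)) :
    ∑ k ∈ s, x k ≠ 0 := by
  rw [← Finset.add_sum_erase s x hi]
  intro hzero
  have : v (x i) = v (∑ k ∈ s.erase i, x k) := by
    rw [eq_neg_of_add_eq_zero_left hzero, v.map_neg]
  exact h.not_ge (this ▸ v.sum_le _ _)

variable [Nontrivial S]

theorem map_units_zpow (u : Sˣ) (k : ℤ) : v ((u ^ k : Sˣ) : S) = v u ^ k := by
  change ((Units.map v.toMonoidHom (u ^ k) : ℝˣ) : ℝ) = _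
  rw [map_zpow, Units.val_zpow_eq_zpow_val]
  rfl

theorem units_zpow_injective {u : Sˣ} (hu : 1 < v u) :
    Function.Injective fun k : ℤ => ((u ^ k : Sˣ) : S) := fun k l hkl =>
  zpow_right_injective₀ (zero_lt_one.trans hu) hu.ne' <| by
    simpa only [map_units_zpow] using congrArg v hkl

theorem sum_mul_units_zpow_ne_zero {ι : Type*} [DecidableEq ι] (u : Sˣ) {q c C : ℝ} {N : ℕ}
    (hq : 1 ≤ q) (hqu : q ≤ v u) {s : Finset ι} {i : ι} (hi : i ∈ s) (b : ι → S) (e : ι → ℤ)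
    (hc : c ≤ v (b i)) (hC : ∀ k ∈ s.erase i, v (b k) ≤ C)
    (he : ∀ k ∈ s.erase i, e k + N ≤ e i) (hN : (s.erase i).card * C < c * q ^ N) :
    ∑ k ∈ s, b k * (u ^ e k : Sˣ) ≠ 0 := by
  set w := v u
  have hw : 0 < w := zero_lt_one.trans_le (hq.trans hqu)
  have hqN : 0 < q ^ N := pow_pos (zero_lt_one.trans_le hq) N
  have hgap : ∀ k ∈ s.erase i, w ^ e k * q ^ N ≤ w ^ e i := fun k hk =>
    calc w ^ e k * q ^ N ≤ w ^ e k * w ^ N := by gcongr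
      _ = w ^ (e k + N) := by rw [zpow_add₀ hw.ne', zpow_natCast]
      _ ≤ w ^ e i := zpow_le_zpow_right₀ (hq.trans hqu) (he k hk)
  refine v.sum_ne_zero_of_sum_erase_lt hi _ ?_
  simp only [v.map_mul, v.map_units_zpow]
  calc ∑ k ∈ s.erase i, v (b k) * w ^ e k
      ≤ ∑ _k ∈ s.erase i, C * (w ^ e i / q ^ N) := Finset.sum_le_sum fun k hk =>
        mul_le_mul (hC k hk) ((le_div_iff₀ hqN).2 (hgap k hk)) (zpow_pos hw _).le
          ((v.nonneg _).trans (hC k hk))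
    _ = (s.erase i).card * C / q ^ N * w ^ e i := by
        rw [Finset.sum_const, nsmul_eq_mul]; ring
    _ < c * w ^ e i := by gcongr; rwa [div_lt_iff₀ hqN]
    _ ≤ v (b i) * w ^ e i := by gcongr

end AbsoluteValue

theorem Int.tendsto_abs_cofinite_atTop_of_finite_fibers {α : Type*} {d : α → ℤ}
    (hd : ∀ m, {x | d x = m}.Finite) : Tendsto (fun x => |d x|) cofinite atTop := by
  refine tendsto_atTop.2 fun N => eventually_cofinite.2 ?_
  refine ((Set.finite_Ioo (-N) N).preimage' fun m _ => hd m).subset fun x hx => ?_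
  simpa [abs_lt] using hx

theorem eq_zero_of_sum_mul_zpow_eq_zero_on_infinite {α : Type*} {R : α → Type*}
    [∀ n, Ring (R n)] [∀ n, Nontrivial (R n)] (v : ∀ n, AbsoluteValue (R n) ℝ)
    (lam : ∀ n, (R n)ˣ) {q : ℝ} (hq : 1 < q) (hlam : ∀ n, q ≤ v n (lam n))
    {ι : Type*} [Fintype ι] (g : ι → α → ℤ)
    (hg : Pairwise fun j k => Tendsto (fun n => |g j n - g k n|) cofinite atTop)
    (a : ι → ∀ n, R n) (hC : ∃ C, ∀ j n, v n (a j n) ≤ C)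
    (hc : ∀ j, a j ≠ 0 → ∃ c > 0, ∀ n, c ≤ v n (a j n))
    {X : Set α} (hX : X.Infinite)
    (hsum : ∀ n ∈ X, ∑ j, a j n * (lam n ^ g j n : (R n)ˣ) = 0) :
    ∀ j, a j = 0 := by
  classical
  by_contra! ⟨j, hj⟩
  obtain ⟨C, hC⟩ := hC
  choose! c hc0 hc using hc
  obtain ⟨N, hN⟩ : ∃ N : ℕ, ∀ k, a k ≠ 0 → Fintype.card ι * C < c k * q ^ N := by
    refine (eventually_all.2 fun k => ?_).exists (f := atTop)
    by_cases hk : a k = 0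
    · exact .of_forall fun _ h => absurd hk h
    · exact ((tendsto_pow_atTop_atTop_of_one_lt hq).const_mul_atTop (hc0 k hk)).eventually_gt_atTop
        _ |>.mono fun _ h _ => h
  obtain ⟨n, hnX, hgap⟩ : ∃ n ∈ X, ∀ k l, k ≠ l → (N : ℤ) ≤ |g k n - g l n| :=
    (frequently_cofinite_mem_iff_infinite.2 hX).and_eventually
      (eventually_all.2 fun k => eventually_all.2 fun l => by
        by_cases hkl : k = l
        · exact .of_forall fun _ h => absurd hkl h
        · exact ((hg hkl).eventually_ge_atTop _).mono fun _ h _ => h) |>.exists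
  set s := Finset.univ.filter (a · ≠ 0)
  obtain ⟨i, his, hmax⟩ := s.exists_max_image (g · n) ⟨j, by simpa [s] using hj⟩
  have hai : a i ≠ 0 := (Finset.mem_filter.1 his).2
  refine (v n).sum_mul_units_zpow_ne_zero (N := N) (lam n) hq.le (hlam n) his (a · n) (g · n)
    (hc i hai n) (fun k _ => hC k n) (fun k hk => ?_) ?_ ?_
  · obtain ⟨hki, hks⟩ := Finset.mem_erase.1 hk
    have := hgap i k (Ne.symm hki)
    rw [abs_of_nonneg (sub_nonneg.2 (hmax k hks))] at this
    linarith
  · calc ((s.erase i).card : ℝ) * C ≤ Fintype.card ι * C := by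
          gcongr
          · exact (v n).nonneg _ |>.trans (hC j n)
          · exact Finset.card_le_univ _
      _ < c i * q ^ N := hN i hai
  · rw [Finset.sum_filter_of_ne fun k _ hk => ?_, hsum n hnX]
    intro hak
    simp [hak] at hk

/-- Let `λ_n` be a unit of `R n` for each `n`, with nonzero elements of the subring `A`
coordinatewise bounded away from `0` and `∞` in absolute value, and `|λ_n|_n ≥ 1 + ε`.
If `(f i)` is a family of integer sequences such that every nonzero element of their
`ℤ`-span takes each integer value only finitely often, then `g ↦ (λ_n ^ g n)_n` is an
injective group homomorphism from the `ℤ`-span into the units of `∏ n, R n` (so its image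
is a free abelian group), and moreover this image is subsequence-free over `A`. -/
theorem zpow_family_injective_and_subsequenceFree
    {R : ℕ → Type*} [∀ n, CommRing (R n)] [∀ n, IsDomain (R n)]
    (v : ∀ n, AbsoluteValue (R n) ℝ) (A : Subring (∀ n, R n))
    (lam : ∀ n, (R n)ˣ)
    (ha : ∀ a ∈ A, a ≠ (0 : ∀ n, R n) →
      ∃ c C : ℝ, 0 < c ∧ c ≤ C ∧ ∀ n, c ≤ v n (a n) ∧ v n (a n) ≤ C)
    (hε : ∃ ε : ℝ, 0 < ε ∧ ∀ n, 1 + ε ≤ v n (lam n))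
    {I : Type*} (f : I → ℕ → ℤ)
    (hf : ∀ g ∈ Submodule.span ℤ (Set.range f), g ≠ (0 : ℕ → ℤ) →
      ∀ m : ℤ, {n : ℕ | g n = m}.Finite) :
    (∀ g h : ℕ → ℤ,
      (fun n => ((lam n ^ (g n + h n) : (R n)ˣ) : R n)) =
        (fun n => ((lam n ^ g n : (R n)ˣ) : R n) * ((lam n ^ h n : (R n)ˣ) : R n))) ∧
    Set.InjOn (fun g : ℕ → ℤ => (fun n => ((lam n ^ g n : (R n)ˣ) : R n)))
      (Submodule.span ℤ (Set.range f) : Set (ℕ → ℤ)) ∧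
    (∀ X : Set ℕ, X.Infinite → ∀ (r : ℕ) (g : Fin r → ℕ → ℤ),
      (∀ j, g j ∈ Submodule.span ℤ (Set.range f)) → Function.Injective g →
      ∀ a : Fin r → ∀ n, R n, (∀ j, a j ∈ A) →
      (∀ n ∈ X, ∑ j, a j n * ((lam n ^ g j n : (R n)ˣ) : R n) = 0) → ∀ j, a j = 0) := by
  obtain ⟨ε, hε, hlam⟩ := hε
  have hlam_gt_one : ∀ n, 1 < v n (lam n) := fun n => by linarith [hlam n]
  refine ⟨fun g h => funext fun n => by rw [zpow_add, Units.val_mul],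
    fun g _ h _ hgh => funext fun n => (v n).units_zpow_injective (hlam_gt_one n) (congrFun hgh n),
    fun X hX r g hg hg_inj a haA hsum => ?_⟩
  have hbound : ∀ j, ∃ C, ∀ n, v n (a j n) ≤ C := fun j => by
    by_cases hj : a j = 0
    · exact ⟨0, fun n => by simp [hj]⟩
    · obtain ⟨c, C, -, -, hb⟩ := ha _ (haA j) hj
      exact ⟨C, fun n => (hb n).2⟩
  choose C hC using hbound
  obtain ⟨M, hM⟩ := (Set.finite_range C).bddAbove
  refine eq_zero_of_sum_mul_zpow_eq_zero_on_infinite v lam (q := 1 + ε) (by linarith) hlam g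
    (fun j k hjk => Int.tendsto_abs_cofinite_atTop_of_finite_fibers
      (hf _ (sub_mem (hg j) (hg k)) (sub_ne_zero.2 (hg_inj.ne hjk))))
    a ⟨M, fun j n => (hC j n).trans (hM ⟨j, rfl⟩)⟩ (fun j hj => ?_) hX hsum
  obtain ⟨c, C, hc, -, hb⟩ := ha _ (haA j) hj
  exact ⟨c, hc, fun n => (hb n).1⟩
end

section
/- Let I be a linearly ordered set and let 𝓕 = {f_i : i ∈ I} be a family of units of R. Assume: (a) every a ∈ A with a ≠ 0 dominates every element of the form b·f_i^{-1} with b ∈ A and i ∈ I; (b) whenever i > j in I, the element f_i·f_j^{-1} belongs to 𝓕. Then 𝓕 is free over A: for pairwise distinct indices i_1,…,i_m ∈ I and a_1,…,a_m ∈ A, if ∑_{j=1}^m a_j·f_{i_j} = 0 in R then a_1 = … = a_m = 0. -/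
open Filter

/-- `f` *dominates* `g` (with respect to the absolute values `v n`) if `f` vanishes at only
finitely many coordinates and `|g n|_n / |f n|_n → 0` as `n → ∞`. -/
def Dominates {R : ℕ → Type*} [∀ n, CommRing (R n)]
    (v : ∀ n, AbsoluteValue (R n) ℝ) (f g : ∀ n, R n) : Prop :=
  {n : ℕ | f n = 0}.Finite ∧
    Tendsto (fun n => v n (g n) / v n (f n)) atTop (nhds 0)

/-!
Suppose some coefficient is nonzero and let `a₀ f_{i₀}` be the term with a nonzero coefficient
whose index `i₀` is largest. Dividing the relation by `f_{i₀}` gives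
`a₀ = -∑ a_j f_{i_j} f_{i₀}⁻¹`, and each `f_{i_j} f_{i₀}⁻¹ = (f_{i₀} f_{i_j}⁻¹)⁻¹` is the
inverse of a member of the family, so every summand is dominated by `a₀`. Domination is
preserved by finite sums and negation, so `a₀` would dominate itself, which is absurd.
-/

namespace Dominates

variable {R : ℕ → Type*} [∀ n, CommRing (R n)] {v : ∀ n, AbsoluteValue (R n) ℝ}
  {f g : ∀ n, R n}

theorem neg (h : Dominates v f g) : Dominates v f (-g) := by
  simpa [Dominates, AbsoluteValue.map_neg] using h

theorem finset_sum {ι : Type*} {s : Finset ι} {g : ι → ∀ n, R n}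
    (hf : {n : ℕ | f n = 0}.Finite) (h : ∀ j ∈ s, Dominates v f (g j)) :
    Dominates v f (∑ j ∈ s, g j) := by
  refine ⟨hf, squeeze_zero (fun n => div_nonneg ((v n).nonneg _) ((v n).nonneg _)) (fun n => ?_)
    (by simpa using tendsto_finsetSum s fun j hj => (h j hj).2)⟩
  rw [Finset.sum_apply, ← Finset.sum_div]
  exact div_le_div_of_nonneg_right ((v n).sum_le _ _) ((v n).nonneg _)

theorem not_self : ¬ Dominates v f f := by
  rintro ⟨hfin, hlim⟩
  have hone : (fun n => v n (f n) / v n (f n)) =ᶠ[atTop] fun _ => (1 : ℝ) := by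
    filter_upwards [Nat.cofinite_eq_atTop ▸ hfin.eventually_cofinite_notMem] with n hn
    exact div_self ((v n).ne_zero_iff.mpr hn)
  exact zero_ne_one (tendsto_nhds_unique (hlim.congr' hone) tendsto_const_nhds)

end Dominates

theorem eq_neg_sum_erase_mul_inv_of_sum_mul_eq_zero {M ι : Type*} [CommRing M] [Fintype ι]
    [DecidableEq ι] {c : ι → M} {w : ι → Mˣ} (h : ∑ j, c j * w j = 0) (j₀ : ι) :
    c j₀ = -∑ j ∈ Finset.univ.erase j₀, c j * ↑(w j * (w j₀)⁻¹) := by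
  have hdiv : ∑ j, c j * ↑(w j * (w j₀)⁻¹) = 0 := by
    simpa [Finset.sum_mul, mul_assoc] using congrArg (· * ((w j₀)⁻¹ : Mˣ).val) h
  rw [← Finset.add_sum_erase _ _ (Finset.mem_univ j₀)] at hdiv
  simpa using eq_neg_of_add_eq_zero_left hdiv

theorem exists_ne_zero_forall_ne_zero_le {J I M : Type*} [Fintype J] [LinearOrder I] [Zero M]
    (ι : J → I) {a : J → M} (ha : ∃ j, a j ≠ 0) :
    ∃ j₀, a j₀ ≠ 0 ∧ ∀ j, a j ≠ 0 → ι j ≤ ι j₀ := by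
  classical
  obtain ⟨j₀, hj₀, hmax⟩ := (Finset.univ.filter fun j => a j ≠ 0).exists_max_image ι
    (by simpa [Finset.filter_nonempty_iff] using ha)
  exact ⟨j₀, (Finset.mem_filter.mp hj₀).2, fun j hj => hmax j (by simpa using hj)⟩

theorem free_over_of_dominates_general
    {R : ℕ → Type*} [∀ n, CommRing (R n)]
    (v : ∀ n, AbsoluteValue (R n) ℝ) (A : Subring (∀ n, R n))
    {I : Type*} [LinearOrder I] (f : I → (∀ n, R n)ˣ)
    (ha : ∀ a ∈ A, a ≠ (0 : ∀ n, R n) → ∀ b ∈ A, ∀ i : I,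
      Dominates v a (b * (((f i)⁻¹ : (∀ n, R n)ˣ) : ∀ n, R n)))
    (hquot : ∀ i j : I, j < i → ∃ t : I, f i * (f j)⁻¹ = f t)
    (m : ℕ) (ι : Fin m → I) (hι : Function.Injective ι)
    (a : Fin m → ∀ n, R n) (haA : ∀ j, a j ∈ A)
    (hsum : ∑ j, a j * ((f (ι j) : (∀ n, R n)ˣ) : ∀ n, R n) = 0) :
    ∀ j, a j = 0 := by
  by_contra! hne
  obtain ⟨j₀, hj₀, hmax⟩ := exists_ne_zero_forall_ne_zero_le ι hne
  have hdom : ∀ j ∈ Finset.univ.erase j₀,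
      Dominates v (a j₀) (a j * ↑(f (ι j) * (f (ι j₀))⁻¹)) := by
    intro j hj
    by_cases haj : a j = 0
    · simpa [haj] using ha _ (haA j₀) hj₀ 0 A.zero_mem (ι j₀)
    · obtain ⟨t, ht⟩ := hquot (ι j₀) (ι j)
        ((hmax j haj).lt_of_ne (hι.ne (Finset.ne_of_mem_erase hj)))
      have hinv : f (ι j) * (f (ι j₀))⁻¹ = (f t)⁻¹ := by
        rw [← ht, mul_inv_rev, inv_inv, mul_comm]
      simpa [hinv] using ha _ (haA j₀) hj₀ _ (haA j) t
  have hfin := (ha _ (haA j₀) hj₀ 0 A.zero_mem (ι j₀)).1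
  refine Dominates.not_self (v := v) (f := a j₀) ?_
  conv_rhs => rw [eq_neg_sum_erase_mul_inv_of_sum_mul_eq_zero hsum j₀]
  exact (Dominates.finset_sum hfin hdom).neg

/-- Let `I` be a linearly ordered set and `𝓕 = {f i : i ∈ I}` a family of units of
`R = ∏ n, R n`.  If every nonzero `a ∈ A` dominates every `b * (f i)⁻¹` with `b ∈ A`, and
`f i * (f j)⁻¹` belongs to the family whenever `i > j`, then `𝓕` is free over `A`: any
vanishing `A`-linear combination of pairwise distinct members of `𝓕` has all coefficients
zero. -/
theorem free_over_of_dominates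
    {R : ℕ → Type*} [∀ n, CommRing (R n)] [∀ n, IsDomain (R n)]
    (v : ∀ n, AbsoluteValue (R n) ℝ) (A : Subring (∀ n, R n))
    {I : Type*} [LinearOrder I] (f : I → (∀ n, R n)ˣ)
    (ha : ∀ a ∈ A, a ≠ (0 : ∀ n, R n) → ∀ b ∈ A, ∀ i : I,
      Dominates v a (b * (((f i)⁻¹ : (∀ n, R n)ˣ) : ∀ n, R n)))
    (hquot : ∀ i j : I, j < i → ∃ t : I, f i * (f j)⁻¹ = f t)
    (m : ℕ) (ι : Fin m → I) (hι : Function.Injective ι)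
    (a : Fin m → ∀ n, R n) (haA : ∀ j, a j ∈ A)
    (hsum : ∑ j, a j * ((f (ι j) : (∀ n, R n)ˣ) : ∀ n, R n) = 0) :
    ∀ j, a j = 0 :=
  free_over_of_dominates_general v A f ha hquot m ι hι a haA hsum
end

section
/- Let K be a field and let λ ∈ K be a nonzero element that is not a root of unity (i.e., λ^n ≠ 1 for every integer n ≥ 1). Then there exists an absolute value v on the smallest subfield of K containing λ (a map to ℝ that is multiplicative, vanishes exactly at 0, and satisfies the triangle inequality) such that v(λ) ≠ 1. -/
/-!
Let `k` be the prime field of `K`. If `λ` is transcendental over `k`, then `k(λ) ≅ k(X)` and the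
`X`-adic absolute value works. If `λ` is algebraic and `k = 𝔽_p`, then `k(λ)` is finite, so `λ`
is a root of unity. If `λ` is algebraic and `k = ℚ`, then `ℚ(λ)` is a number field. Either some
complex embedding moves `|λ|` away from `1`, or by Kronecker's theorem `λ` is not an algebraic
integer, and then some prime of the ring of integers gives `|λ|_𝔭 > 1`.
-/

open scoped NNReal
open IsDedekindDomain Polynomial IntermediateField NumberField

theorem IsDedekindDomain.exists_absoluteValue_one_lt_of_notMem_range {R F : Type*} [CommRing R]
    [IsDedekindDomain R] [Field F] [Algebra R F] [IsFractionRing R F] {x : F}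
    (hx : x ∉ (algebraMap R F).range) : ∃ v : AbsoluteValue F ℝ, 1 < v x := by
  by_contra! h
  refine hx (HeightOneSpectrum.mem_integers_of_valuation_le_one F x fun v ↦ ?_)
  have hb : (1 : ℝ≥0) < 2 := one_lt_two
  have : (v.adicAbvDef hb x : ℝ) ≤ 1 := h (v.adicAbv hb)
  rwa [NNReal.coe_le_one, HeightOneSpectrum.adicAbvDef, WithZeroMulInt.toNNReal_le_one_iff hb]
    at this

theorem RatFunc.exists_absoluteValue_X_lt_one (k : Type*) [Field k] :
    ∃ v : AbsoluteValue (RatFunc k) ℝ, v RatFunc.X < 1 := by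
  refine ⟨(idealX k).adicAbv (K := RatFunc k) one_lt_two, ?_⟩
  rw [← RatFunc.algebraMap_X, HeightOneSpectrum.adicAbv_coe_lt_one_iff]
  exact Ideal.mem_span_singleton_self _

theorem Transcendental.exists_absoluteValue_adjoin_ne_one {k L : Type*} [Field k] [Field L]
    [Algebra k L] {x : L} (hx : Transcendental k x) :
    ∃ v : AbsoluteValue k⟮x⟯ ℝ, v (AdjoinSimple.gen k x) ≠ 1 := by
  obtain ⟨v, hv⟩ := RatFunc.exists_absoluteValue_X_lt_one k
  refine ⟨v.comp (RatFunc.algEquivOfTranscendental x hx).symm.injective, ?_⟩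
  change v ((RatFunc.algEquivOfTranscendental x hx).symm (AdjoinSimple.gen k x)) ≠ 1
  rw [RatFunc.algEquivOfTranscendental_symm_gen]
  exact hv.ne

theorem IsAlgebraic.exists_pow_eq_one_of_finite {k L : Type*} [Field k] [Finite k] [Field L]
    [Algebra k L] {x : L} (halg : IsAlgebraic k x) (hx : x ≠ 0) : ∃ n, 0 < n ∧ x ^ n = 1 := by
  have := adjoin.finiteDimensional halg.isIntegral
  have : Finite k⟮x⟯ := Module.finite_of_finite k
  have hgen : AdjoinSimple.gen k x ≠ 0 := fun h ↦ hx (congrArg Subtype.val h)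
  obtain ⟨n, hn, hpow⟩ := (isOfFinOrder_of_finite (Units.mk0 _ hgen)).exists_pow_eq_one
  exact ⟨n, hn, congrArg (fun u : (k⟮x⟯)ˣ ↦ (u : L)) hpow⟩

theorem NumberField.exists_absoluteValue_ne_one {K : Type*} [Field K] [NumberField K] {x : K}
    (hx : ∀ n, 0 < n → x ^ n ≠ 1) : ∃ v : AbsoluteValue K ℝ, v x ≠ 1 := by
  by_cases harch : ∀ φ : K →+* ℂ, ‖φ x‖ = 1
  · have hint : x ∉ (algebraMap (𝓞 K) K).range := by
      rintro ⟨y, rfl⟩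
      obtain ⟨n, hn, hxn⟩ := Embeddings.pow_eq_one_of_norm_eq_one K ℂ y.isIntegral_coe harch
      exact hx n hn hxn
    obtain ⟨v, hv⟩ := IsDedekindDomain.exists_absoluteValue_one_lt_of_notMem_range hint
    exact ⟨v, hv.ne'⟩
  · push Not at harch
    obtain ⟨φ, hφ⟩ := harch
    exact ⟨place φ, hφ⟩

theorem Subfield.exists_absoluteValue_closure_ne_one_of_adjoin (k : Type*) {K : Type*} [Field k] [Field K]
    [Algebra k K] {l : K} (h : ∃ v : AbsoluteValue k⟮l⟯ ℝ, v (AdjoinSimple.gen k l) ≠ 1) :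
    ∃ v : AbsoluteValue (Subfield.closure {l}) ℝ,
      v ⟨l, Subfield.subset_closure (Set.mem_singleton l)⟩ ≠ 1 := by
  obtain ⟨v, hv⟩ := h
  have hle : Subfield.closure {l} ≤ (k⟮l⟯).toSubfield :=
    Subfield.closure_le.mpr (Set.singleton_subset_iff.mpr (mem_adjoin_simple_self k l))
  exact ⟨v.comp (Subfield.inclusion hle).injective, hv⟩

/-- If `λ` is a nonzero element of a field `K` which is not a root of unity, then there is an
absolute value on the subfield of `K` generated by `λ` taking a value `≠ 1` at `λ`. -/
theorem exists_absoluteValue_ne_one_of_not_rootOfUnity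
    {K : Type*} [Field K] (l : K) (hl : l ≠ 0)
    (hroot : ∀ n : ℕ, 1 ≤ n → l ^ n ≠ 1) :
    ∃ v : AbsoluteValue (↥(Subfield.closure ({l} : Set K))) ℝ,
      v ⟨l, Subfield.subset_closure (Set.mem_singleton l)⟩ ≠ 1 := by
  obtain ⟨p, _⟩ := CharP.exists K
  rcases CharP.char_is_prime_or_zero K p with hp | rfl
  · have := Fact.mk hp
    let := ZMod.algebra K p
    refine Subfield.exists_absoluteValue_closure_ne_one_of_adjoin (ZMod p) ?_
    by_cases halg : IsAlgebraic (ZMod p) l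
    · obtain ⟨n, hn, hln⟩ := halg.exists_pow_eq_one_of_finite hl
      exact absurd hln (hroot n hn)
    · exact Transcendental.exists_absoluteValue_adjoin_ne_one halg
  · have := CharP.charP_to_charZero K
    refine Subfield.exists_absoluteValue_closure_ne_one_of_adjoin ℚ ?_
    by_cases halg : IsAlgebraic ℚ l
    · have := adjoin.finiteDimensional halg.isIntegral
      have := NumberField.of_module_finite ℚ ℚ⟮l⟯
      exact NumberField.exists_absoluteValue_ne_one fun n hn h ↦
        hroot n hn (congrArg Subtype.val h)
    · exact Transcendental.exists_absoluteValue_adjoin_ne_one halg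
end

section
/- Let K be a field, F a subfield of K, and λ ∈ K a nonzero element that is algebraic over F. If for some integer k the minimal polynomial of λ^k over F equals the minimal polynomial of λ over F (i.e., λ^k is a conjugate of λ over F), then k = 1 or k = −1, or there exists m ≥ 1 such that λ is a primitive m-th root of unity and gcd(m,k) = 1. -/
/-!
Conjugacy over `F` is preserved by `x ↦ x ^ k` (both sides are images of the generator of `F⟮λ⟯`
under `F`-embeddings), so every iterate `λ ^ k ^ n` is a conjugate of `λ`. There are only finitely
many conjugates, so for `k ≠ ±1` two iterates agree and `λ` is a root of unity, of order `m` say.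
Conjugates have the same multiplicative order, and `λ ^ k` has order `m / gcd m k`.
-/

open IntermediateField Polynomial

section
variable {F K : Type*} [Field F] [Field K] [Algebra F K] {x y : K}

theorem IsConjRoot.zpow (hx : IsIntegral F x) (h : IsConjRoot F x y) (k : ℤ) :
    IsConjRoot F (x ^ k) (y ^ k) := by
  let φ : F⟮x⟯ →ₐ[F] K :=
    (algHomAdjoinIntegralEquiv F hx).symm ⟨y, (isConjRoot_iff_mem_minpoly_aroots hx).mp h⟩
  have hφ : φ (AdjoinSimple.gen F x) = y := algHomAdjoinIntegralEquiv_symm_apply_gen F hx _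
  have hx' : minpoly F (x ^ k) = minpoly F (AdjoinSimple.gen F x ^ k) := by
    simpa using minpoly.algHom_eq F⟮x⟯.val Subtype.val_injective (AdjoinSimple.gen F x ^ k)
  have hy' : minpoly F (y ^ k) = minpoly F (AdjoinSimple.gen F x ^ k) := by
    simpa [hφ] using minpoly.algHom_eq φ φ.injective (AdjoinSimple.gen F x ^ k)
  exact hx'.trans hy'.symm

theorem IsConjRoot.zpow_pow (hx : IsIntegral F x) {k : ℤ} (h : IsConjRoot F x (x ^ k)) :
    ∀ n : ℕ, IsConjRoot F x (x ^ k ^ n)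
  | 0 => by simpa using IsConjRoot.refl
  | n + 1 => by
    rw [pow_succ, zpow_mul]
    exact h.trans ((zpow_pow hx h n).zpow hx k)

theorem IsConjRoot.pow_eq_one_iff {A : Type*} [Ring A] [Algebra F A] {a b : A}
    (h : IsConjRoot F a b) (n : ℕ) : a ^ n = 1 ↔ b ^ n = 1 := by
  have hroot (c : A) : c ^ n = 1 ↔ minpoly F c ∣ X ^ n - 1 := by
    simp [minpoly.dvd_iff, sub_eq_zero]
  rw [hroot, hroot, isConjRoot_def.mp h]

theorem IsConjRoot.orderOf_eq {A : Type*} [Ring A] [Algebra F A] {a b : A}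
    (h : IsConjRoot F a b) : orderOf a = orderOf b :=
  orderOf_eq_orderOf_iff.mpr h.pow_eq_one_iff

theorem IsConjRoot.isOfFinOrder_of_zpow (hx₀ : x ≠ 0) (hx : IsIntegral F x) {k : ℤ}
    (h : IsConjRoot F x (x ^ k)) (hk₁ : k ≠ 1) (hk₂ : k ≠ -1) : IsOfFinOrder x := by
  rcases eq_or_ne k 0 with rfl | hk₀
  · rw [zpow_zero, ← map_one (algebraMap F K)] at h
    simp [h.symm.eq_algebraMap]
  obtain ⟨a, b, hab, hxab⟩ := Set.Finite.exists_lt_map_eq_of_forall_mem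
    (fun n ↦ (isConjRoot_iff_mem_minpoly_rootSet hx).mp (h.zpow_pow hx n))
    (rootSet_finite (minpoly F x) K)
  have hkab : k ^ a ≠ k ^ b := (Int.pow_right_injective (by omega)).ne hab.ne
  refine isOfFinOrder_iff_zpow_eq_one.mpr ⟨k ^ a - k ^ b, sub_ne_zero.mpr hkab, ?_⟩
  rw [zpow_sub₀ hx₀, hxab, div_self (zpow_ne_zero _ hx₀)]
end

theorem IsOfFinOrder.gcd_orderOf_eq_one_of_orderOf_zpow_eq {G : Type*} [DivisionMonoid G]
    {x : G} (hx : IsOfFinOrder x) {k : ℤ} (h : orderOf (x ^ k) = orderOf x) :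
    Int.gcd (orderOf x) k = 1 := by
  set m := orderOf x
  obtain ⟨e, he⟩ : Int.gcd m k ∣ m := Int.gcd_dvd_natAbs_left m k
  obtain ⟨c, hc⟩ : (Int.gcd m k : ℤ) ∣ k := Int.gcd_dvd_right m k
  have hpow : (x ^ k) ^ e = 1 := by
    have he' : (m : ℤ) = Int.gcd m k * e := by exact_mod_cast he
    have hexp : k * e = c * m := by linear_combination (e : ℤ) * hc - c * he'
    rw [← zpow_natCast, ← zpow_mul, hexp, zpow_mul', zpow_natCast, pow_orderOf_eq_one, one_zpow]
  have hem : e = m := Nat.dvd_antisymm (Dvd.intro_left _ he.symm)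
    (h ▸ orderOf_dvd_of_pow_eq_one hpow)
  rw [hem] at he
  exact (Nat.mul_eq_right hx.orderOf_pos.ne').mp he.symm

/-- Let `F` be a subfield of a field `K` and `λ ∈ K` a nonzero element algebraic over `F`.
If `λ^k` is a conjugate of `λ` over `F` (same minimal polynomial), then `k = ±1` or `λ` is a
primitive `m`-th root of unity for some `m ≥ 1` with `gcd (m, k) = 1`. -/
theorem eq_one_or_neg_one_or_isPrimitiveRoot_of_minpoly_zpow
    {K : Type*} [Field K] (F : Subfield K) (l : K) (hl : l ≠ 0)
    (halg : IsAlgebraic F l) (k : ℤ)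
    (hmin : minpoly F (l ^ k) = minpoly F l) :
    k = 1 ∨ k = -1 ∨
      ∃ m : ℕ, 1 ≤ m ∧ IsPrimitiveRoot l m ∧ Int.gcd (m : ℤ) k = 1 := by
  have hconj : IsConjRoot F (l ^ k) l := hmin
  by_cases hk : k = 1 ∨ k = -1
  · exact hk.elim Or.inl (Or.inr ∘ Or.inl)
  obtain ⟨hk₁, hk₂⟩ := not_or.mp hk
  have hfin : IsOfFinOrder l := hconj.symm.isOfFinOrder_of_zpow hl halg.isIntegral hk₁ hk₂
  exact Or.inr <| Or.inr ⟨orderOf l, hfin.orderOf_pos, IsPrimitiveRoot.orderOf l,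
    hfin.gcd_orderOf_eq_one_of_orderOf_zpow_eq hconj.orderOf_eq⟩
end

section
/- Let K be a field equipped with an absolute value v (a map to ℝ that is multiplicative, vanishes exactly at 0, and satisfies the triangle inequality), and let λ ∈ K be nonzero with v(λ) ≠ 1. Let (k_n) and (l_n) be sequences of integers such that for every pair of integers (α,β) ≠ (0,0) and every integer γ, the set {n ∈ ℕ : α·k_n + β·l_n = γ} is finite. Then for every nonzero polynomial W in two variables with coefficients in K, the set {n ∈ ℕ : W(λ^{k_n}, λ^{l_n}) = 0} is finite. -/
/-!
Expanding `W` at `(λ ^ k n, λ ^ L n)` gives a sum of terms `a_d λ ^ (d · (k n, L n))` over the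
support of `W`. If the sum vanishes, the largest term (in `v`) is bounded by `#supp W` times the
second largest, so for some `d ≠ d'` in the support `v λ ^ ((d - d') · (k n, L n))` lies in a
compact interval of `(0, ∞)` depending only on `W`. Since `v λ ≠ 1`, that confines the integer
`(d - d') · (k n, L n)` to a finite set, and each of its values is taken only finitely often.
-/

open Set Finset

lemma finite_setOf_zpow_mem_Icc {c : ℝ} (hc : 0 < c) (hc1 : c ≠ 1) {A B : ℝ} (hA : 0 < A) :
    {m : ℤ | c ^ m ∈ Icc A B}.Finite := by
  have hlog : Real.log c ≠ 0 := Real.log_ne_zero_of_pos_of_ne_one hc hc1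
  refine (tendsto_cofinite_cocompact_iff.mp (Int.tendsto_zmultiplesHom_cofinite hlog)
    (Icc (Real.log A) (Real.log B)) isCompact_Icc).subset fun m hm => ?_
  rw [Set.mem_preimage, zmultiplesHom_apply, zsmul_eq_mul, ← Real.log_zpow]
  exact ⟨Real.log_le_log hA hm.1, Real.log_le_log (zpow_pos hc m) hm.2⟩

lemma Finset.prod_zpow_eq_zpow_sum₀ {ι G₀ : Type*} [CommGroupWithZero G₀] {a : G₀} (ha : a ≠ 0)
    (s : Finset ι) (f : ι → ℤ) : ∏ i ∈ s, a ^ f i = a ^ ∑ i ∈ s, f i := by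
  classical
  induction s using Finset.induction_on with
  | empty => simp
  | insert j s hj ih => rw [prod_insert hj, sum_insert hj, ih, zpow_add₀ ha]

lemma MvPolynomial.eval_zpow_eq_sum {K σ : Type*} [Field K] [Fintype σ] {l : K} (hl : l ≠ 0)
    (x : σ → ℤ) (W : MvPolynomial σ K) :
    eval (fun i => l ^ x i) W = ∑ d ∈ W.support, coeff d W * l ^ ∑ i, (d i : ℤ) * x i := by
  rw [eval_eq']
  refine sum_congr rfl fun d _ => congrArg _ ?_
  simp_rw [← zpow_natCast, ← zpow_mul, mul_comm (x _)]
  exact prod_zpow_eq_zpow_sum₀ hl _ _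

lemma AbsoluteValue.exists_ne_le_le_card_mul_of_sum_eq_zero {R S ι : Type*} [Ring R] [CommRing S]
    [LinearOrder S] [IsStrictOrderedRing S] (v : AbsoluteValue R S) {s : Finset ι} {x : ι → R}
    (hx : ∃ i ∈ s, x i ≠ 0) (hsum : ∑ i ∈ s, x i = 0) :
    ∃ i ∈ s, ∃ j ∈ s, i ≠ j ∧ v (x j) ≤ v (x i) ∧ v (x i) ≤ #s * v (x j) := by
  classical
  obtain ⟨i₀, hi₀, hxi₀⟩ := hx
  obtain ⟨i, hi, hmax⟩ := s.exists_max_image (fun i => v (x i)) ⟨i₀, hi₀⟩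
  have hxi : x i = -∑ j ∈ s.erase i, x j := by
    rw [← add_sum_erase s x hi] at hsum
    exact eq_neg_of_add_eq_zero_left hsum
  have hxi_ne : x i ≠ 0 := v.pos_iff.mp ((v.pos hxi₀).trans_le (hmax i₀ hi₀))
  have hrest : (s.erase i).Nonempty :=
    nonempty_iff_ne_empty.mpr fun h => hxi_ne (by rw [hxi, h, sum_empty, neg_zero])
  obtain ⟨j, hj, hjmax⟩ := (s.erase i).exists_max_image (fun j => v (x j)) hrest
  refine ⟨i, hi, j, mem_of_mem_erase hj, (ne_of_mem_erase hj).symm, hmax j (mem_of_mem_erase hj), ?_⟩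
  calc v (x i) = v (∑ j ∈ s.erase i, x j) := by rw [hxi, v.map_neg]
    _ ≤ ∑ j ∈ s.erase i, v (x j) := v.sum_le _ _
    _ ≤ #(s.erase i) • v (x j) := sum_le_card_nsmul _ _ _ hjmax
    _ ≤ #s * v (x j) := by
      rw [nsmul_eq_mul]
      exact mul_le_mul_of_nonneg_right (by exact_mod_cast card_erase_le) (v.nonneg _)

lemma AbsoluteValue.exists_ne_zpow_sub_mem_Icc_of_sum_mul_zpow_eq_zero {K ι : Type*} [Field K]
    (v : AbsoluteValue K ℝ) {l : K} (hl : l ≠ 0) {s : Finset ι} (hs : s.Nonempty) {a : ι → K}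
    (ha : ∀ i ∈ s, a i ≠ 0) {e : ι → ℤ} (hsum : ∑ i ∈ s, a i * l ^ e i = 0) :
    ∃ i ∈ s, ∃ j ∈ s, i ≠ j ∧
      v l ^ (e i - e j) ∈ Icc (v (a j) / v (a i)) (#s * v (a j) / v (a i)) := by
  obtain ⟨i₀, hi₀⟩ := hs
  obtain ⟨i, hi, j, hj, hij, hlow, hup⟩ := v.exists_ne_le_le_card_mul_of_sum_eq_zero
    ⟨i₀, hi₀, mul_ne_zero (ha i₀ hi₀) (zpow_ne_zero _ hl)⟩ hsum
  refine ⟨i, hi, j, hj, hij, ?_⟩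
  have hai : 0 < v (a i) := v.pos (ha i hi)
  have hpow : 0 < v l ^ e j := zpow_pos (v.pos hl) _
  have hsplit : v (a i * l ^ e i) = v (a i) * v l ^ (e i - e j) * v l ^ e j := by
    rw [map_mul, map_zpow₀, mul_assoc, ← zpow_add₀ (v.ne_zero hl), sub_add_cancel]
  rw [hsplit, map_mul, map_zpow₀] at hlow hup
  constructor
  · rw [div_le_iff₀' hai]
    exact le_of_mul_le_mul_right hlow hpow
  · rw [le_div_iff₀' hai]
    exact le_of_mul_le_mul_right (by linarith) hpow

open MvPolynomial in
theorem finite_setOf_eval_zpow_eq_zero {K σ : Type*} [Field K] [Fintype σ]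
    (v : AbsoluteValue K ℝ) {l : K} (hl : l ≠ 0) (hv : v l ≠ 1) (x : ℕ → σ → ℤ)
    (hx : ∀ α : σ → ℤ, α ≠ 0 → ∀ γ : ℤ, {n | ∑ i, α i * x n i = γ}.Finite)
    {W : MvPolynomial σ K} (hW : W ≠ 0) :
    {n | eval (fun i => l ^ x n i) W = 0}.Finite := by
  classical
  set S := W.support
  let T : (σ →₀ ℕ) × (σ →₀ ℕ) → Set ℤ := fun p => {m | v l ^ m ∈
    Icc (v (coeff p.2 W) / v (coeff p.1 W)) (#S * v (coeff p.2 W) / v (coeff p.1 W))}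
  let α : (σ →₀ ℕ) × (σ →₀ ℕ) → σ → ℤ := fun p i => p.1 i - p.2 i
  have hsub : {n | eval (fun i => l ^ x n i) W = 0} ⊆
      ⋃ p ∈ S.offDiag, ⋃ m ∈ T p, {n | ∑ i, α p i * x n i = m} := by
    intro n (hn : eval (fun i => l ^ x n i) W = 0)
    rw [eval_zpow_eq_sum hl] at hn
    obtain ⟨d, hd, d', hd', hne, hmem⟩ := v.exists_ne_zpow_sub_mem_Icc_of_sum_mul_zpow_eq_zero hl
      (support_nonempty.mpr hW) (fun d hd => mem_support_iff.mp hd) hn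
    simp only [mem_iUnion]
    refine ⟨(d, d'), mem_offDiag.mpr ⟨hd, hd', hne⟩, _, hmem, ?_⟩
    simp [α, sub_mul, sum_sub_distrib]
  refine Set.Finite.subset (S.offDiag.finite_toSet.biUnion fun p hp => ?_) hsub
  obtain ⟨hp₁, hp₂, hne⟩ := mem_offDiag.mp hp
  have hα : α p ≠ 0 := fun h => hne <| Finsupp.ext fun i => by
    simpa [α, sub_eq_zero] using congrFun h i
  exact (finite_setOf_zpow_mem_Icc (v.pos hl) hv
    (div_pos (v.pos (mem_support_iff.mp hp₂)) (v.pos (mem_support_iff.mp hp₁)))).biUnion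
    fun m _ => hx _ hα m

/-- Let `K` be a field with an absolute value `v`, and `λ ∈ K` nonzero with `v λ ≠ 1`.  If
the integer sequences `(k n)` and `(l n)` satisfy `α k_n + β l_n = γ` only finitely often
for every `(α, β) ≠ (0, 0)` and every `γ`, then every nonzero two-variable polynomial over
`K` vanishes at `(λ ^ k_n, λ ^ l_n)` only finitely often. -/
theorem finite_zero_set_of_absoluteValue_ne_one
    {K : Type*} [Field K] (v : AbsoluteValue K ℝ) (l : K) (hl : l ≠ 0)
    (hv : v l ≠ 1) (k L : ℕ → ℤ)
    (h : ∀ α β : ℤ, (α, β) ≠ (0, 0) → ∀ γ : ℤ,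
      {n : ℕ | α * k n + β * L n = γ}.Finite) :
    ∀ W : MvPolynomial (Fin 2) K, W ≠ 0 →
      {n : ℕ | MvPolynomial.eval ![l ^ k n, l ^ L n] W = 0}.Finite := by
  intro W hW
  have hx : ∀ α : Fin 2 → ℤ, α ≠ 0 → ∀ γ : ℤ, {n | ∑ i, α i * ![k n, L n] i = γ}.Finite := by
    intro α hα γ
    have hα' : (α 0, α 1) ≠ (0, 0) := fun h0 => hα <| funext fun i => by
      fin_cases i
      exacts [congrArg Prod.fst h0, congrArg Prod.snd h0]
    simpa [Fin.sum_univ_two] using h (α 0) (α 1) hα' γ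
  have hpoint : ∀ n, ![l ^ k n, l ^ L n] = fun i => l ^ ![k n, L n] i := fun n => by
    funext i; fin_cases i <;> rfl
  simpa only [hpoint] using finite_setOf_eval_zpow_eq_zero v hl hv _ hx hW
end

section
/- Let λ ∈ ℂ be a nonzero algebraic number that is not a root of unity, let γ be a nonzero integer, and let P ∈ ℤ[x] be a polynomial that is irreducible in ℤ[x] and satisfies P(λ^γ) = 0. Then for every two-variable polynomial W ∈ ℤ[x,y], the following are equivalent: (a) W(λ^γ, λ^l) = 0 for infinitely many integers l; (b) P(x) divides W(x,y) in ℤ[x,y]. -/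
/-!
Write `W` as a polynomial in `y` whose coefficients `cᵢ` lie in `ℤ[x]`. As `λ` is not a root of
unity, `t ↦ λ^t` is injective, so if `W(λ^γ, λ^t) = 0` for infinitely many `t`, then the
one-variable polynomial `∑ cᵢ(λ^γ) yⁱ` has infinitely many roots and vanishes: every `cᵢ` has the
root `λ^γ`. By Gauss's lemma `P` is primitive and irreducible over `ℚ`, so it divides each `cᵢ`
over `ℚ`, hence over `ℤ`.
-/

open Polynomial

theorem zpow_injective_of_pow_ne_one {G₀ : Type*} [GroupWithZero G₀] {x : G₀} (hx : x ≠ 0)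
    (h : ∀ n : ℕ, 1 ≤ n → x ^ n ≠ 1) : Function.Injective (x ^ · : ℤ → G₀) := by
  have hu : ¬IsOfFinOrder (Units.mk0 x hx) := by
    rw [isOfFinOrder_iff_pow_eq_one]
    rintro ⟨n, hn, hxn⟩
    exact h n hn (by simpa [Units.ext_iff] using hxn)
  intro m n hmn
  exact injective_zpow_iff_not_isOfFinOrder.mpr hu (Units.ext (by simpa using hmn))

theorem Irreducible.dvd_of_aeval_eq_zero {R : Type*} (K : Type*) {A : Type*} [CommRing R]
    [IsDomain R] [NormalizedGCDMonoid R] [Field K] [Algebra R K] [IsFractionRing R K] [CommRing A]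
    [Nontrivial A] [Algebra R A] [Algebra K A] [IsScalarTower R K A] {P c : R[X]}
    (hP : Irreducible P) {α : A} (hPα : aeval α P = 0) (hcα : aeval α c = 0) : P ∣ c := by
  have hinj : Function.Injective (algebraMap R A) := by
    rw [IsScalarTower.algebraMap_eq R K A]
    exact (algebraMap K A).injective.comp (IsFractionRing.injective R K)
  have hprim : P.IsPrimitive :=
    hP.isPrimitive (natDegree_pos_of_aeval_root hP.ne_zero hPα
      fun x hx => hinj (by rw [hx, map_zero])).ne'
  have hPK : Irreducible (P.map (algebraMap R K)) :=
    hprim.irreducible_iff_irreducible_map_fraction_map.mp hP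
  refine hprim.dvd_of_fraction_map_dvd_fraction_map (K := K) (by_contra fun hndvd => ?_)
  -- a Bézout relation between `P` and `c` over `K` would evaluate to `0 = 1` at `α`
  obtain ⟨a, b, hab⟩ := hPK.coprime_iff_not_dvd.mpr hndvd
  simpa [aeval_map_algebraMap, hPα, hcα] using congrArg (aeval α) hab

namespace MvPolynomial

variable (R : Type*) [CommSemiring R]

noncomputable def finTwoAlgEquiv : MvPolynomial (Fin 2) R ≃ₐ[R] R[X][X] :=
  (renameEquiv R (Equiv.swap 0 1)).trans <| (finSuccEquiv R 1).trans <|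
    Polynomial.mapAlgEquiv <| (finSuccEquiv R 0).trans <| Polynomial.mapAlgEquiv <|
      isEmptyAlgEquiv R (Fin 0)

variable {R}

@[simp]
theorem finTwoAlgEquiv_X_zero : finTwoAlgEquiv R (X 0) = Polynomial.C Polynomial.X := by
  have h := finSuccEquiv_X_succ (R := R) (n := 1) (j := 0)
  rw [Fin.succ_zero_eq_one] at h
  simp [finTwoAlgEquiv, h, finSuccEquiv_X_zero]

@[simp]
theorem finTwoAlgEquiv_X_one : finTwoAlgEquiv R (X 1) = Polynomial.X := by
  simp [finTwoAlgEquiv, finSuccEquiv_X_zero]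

theorem finTwoAlgEquiv_aeval_X_zero (P : R[X]) :
    finTwoAlgEquiv R (Polynomial.aeval (X 0) P) = Polynomial.C P := by
  rw [← AlgEquiv.coe_toAlgHom, ← Polynomial.aeval_algHom_apply, AlgEquiv.coe_toAlgHom,
    finTwoAlgEquiv_X_zero, ← Polynomial.algebraMap_eq, Polynomial.aeval_algebraMap_apply,
    Polynomial.aeval_X_left_apply]

theorem aeval_X_zero_dvd_iff (P : R[X]) (W : MvPolynomial (Fin 2) R) :
    Polynomial.aeval (X 0) P ∣ W ↔ ∀ i, P ∣ (finTwoAlgEquiv R W).coeff i := by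
  rw [← map_dvd_iff (finTwoAlgEquiv R), finTwoAlgEquiv_aeval_X_zero,
    Polynomial.C_dvd_iff_dvd_coeff]

theorem aeval_eq_eval_map_finTwoAlgEquiv {A : Type*} [CommSemiring A] [Algebra R A] (a b : A)
    (W : MvPolynomial (Fin 2) R) :
    MvPolynomial.aeval ![a, b] W =
      ((finTwoAlgEquiv R W).map (Polynomial.aeval a).toRingHom).eval b := by
  suffices MvPolynomial.aeval ![a, b] = ((Polynomial.aeval b).restrictScalars R).comp
      ((Polynomial.mapAlgHom (Polynomial.aeval a)).comp (finTwoAlgEquiv R).toAlgHom) from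
    DFunLike.congr_fun this W
  refine algHom_ext fun i => ?_
  fin_cases i <;> simp

end MvPolynomial

theorem infinite_vanishing_iff_dvd_general
    (l : ℂ) (hl : l ≠ 0) (hroot : ∀ n : ℕ, 1 ≤ n → l ^ n ≠ 1)
    (γ : ℤ) (P : Polynomial ℤ) (hP : Irreducible P)
    (hPl : Polynomial.aeval (l ^ γ) P = 0) (W : MvPolynomial (Fin 2) ℤ) :
    {t : ℤ | MvPolynomial.aeval ![l ^ γ, l ^ t] W = 0}.Infinite ↔
      Polynomial.aeval (MvPolynomial.X 0 : MvPolynomial (Fin 2) ℤ) P ∣ W := by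
  set Q := (MvPolynomial.finTwoAlgEquiv ℤ W).map (aeval (l ^ γ)).toRingHom
  have hQ : Q = 0 ↔ ∀ i, P ∣ (MvPolynomial.finTwoAlgEquiv ℤ W).coeff i := by
    simp only [Polynomial.ext_iff, Q, coeff_map, coeff_zero]
    refine forall_congr' fun i => ⟨hP.dvd_of_aeval_eq_zero ℚ hPl, ?_⟩
    rintro ⟨c, hc⟩
    simp [hc, hPl]
  simp_rw [MvPolynomial.aeval_eq_eval_map_finTwoAlgEquiv, MvPolynomial.aeval_X_zero_dvd_iff, ← hQ]
  constructor
  · intro hS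
    have hinj := zpow_injective_of_pow_ne_one hl hroot
    refine eq_zero_of_infinite_isRoot Q ((hS.image hinj.injOn).mono ?_)
    rintro _ ⟨t, ht, rfl⟩
    exact ht
  · intro h
    change {t : ℤ | Q.eval (l ^ t) = 0}.Infinite
    simpa [h] using Set.infinite_univ

/-- Let `λ ∈ ℂ` be nonzero and not a root of unity, `γ` a nonzero integer, and `P ∈ ℤ[x]`
irreducible with `P (λ^γ) = 0`.  Then a two-variable integer polynomial `W` vanishes at
`(λ^γ, λ^t)` for infinitely many integers `t` if and only if `P (x)` divides `W (x, y)` in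
`ℤ[x, y]`. -/
theorem infinite_vanishing_iff_dvd
    (l : ℂ) (hl : l ≠ 0) (hroot : ∀ n : ℕ, 1 ≤ n → l ^ n ≠ 1)
    (γ : ℤ) (hγ : γ ≠ 0) (P : Polynomial ℤ) (hP : Irreducible P)
    (hPl : Polynomial.aeval (l ^ γ) P = 0) (W : MvPolynomial (Fin 2) ℤ) :
    {t : ℤ | MvPolynomial.aeval ![l ^ γ, l ^ t] W = 0}.Infinite ↔
      Polynomial.aeval (MvPolynomial.X 0 : MvPolynomial (Fin 2) ℤ) P ∣ W :=
  infinite_vanishing_iff_dvd_general l hl hroot γ P hP hPl W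
end

section
/- Let λ, μ ∈ ℂ be nonzero algebraic numbers such that the minimal polynomial of λ over ℚ equals the minimal polynomial of μ over ℚ or the minimal polynomial of μ^{-1} over ℚ. Then the groups G(λ) and G(μ) are isomorphic. -/
/-- The semidirect product `R ⋊_u ℤ`: underlying set `R × ℤ` with multiplication
`(r, k) · (r', k') = (r + u^k · r', k + k')`, where `u` is a unit of the commutative ring
`R`. -/
def SDP (R : Type*) [CommRing R] (u : Rˣ) : Type _ := R × ℤ

namespace SDP

variable {R : Type*} [CommRing R] {u : Rˣ}

instance : Mul (SDP R u) := ⟨fun g h => (g.1 + ((u ^ g.2 : Rˣ) : R) * h.1, g.2 + h.2)⟩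
instance : One (SDP R u) := ⟨((0 : R), (0 : ℤ))⟩
instance : Inv (SDP R u) := ⟨fun g => (-(((u ^ (-g.2) : Rˣ) : R) * g.1), -g.2)⟩

theorem mul_def (g h : SDP R u) :
    g * h = (g.1 + ((u ^ g.2 : Rˣ) : R) * h.1, g.2 + h.2) := rfl
theorem one_def : (1 : SDP R u) = ((0 : R), (0 : ℤ)) := rfl
theorem inv_def (g : SDP R u) : g⁻¹ = (-(((u ^ (-g.2) : Rˣ) : R) * g.1), -g.2) := rfl

instance instGroup : Group (SDP R u) where
  mul_assoc a b c := by
    rw [mul_def, mul_def, mul_def, mul_def]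
    refine Prod.ext ?_ ?_
    · show (a.1 + ↑(u ^ a.2) * b.1) + ↑(u ^ (a.2 + b.2)) * c.1
        = a.1 + ↑(u ^ a.2) * (b.1 + ↑(u ^ b.2) * c.1)
      rw [zpow_add]; push_cast; ring
    · show (a.2 + b.2) + c.2 = a.2 + (b.2 + c.2); omega
  one_mul a := by
    rw [mul_def]
    refine Prod.ext ?_ ?_
    · show (0 : R) + ↑(u ^ (0 : ℤ)) * a.1 = a.1; simp
    · show (0 : ℤ) + a.2 = a.2; omega
  mul_one a := by
    rw [mul_def]
    refine Prod.ext ?_ ?_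
    · show a.1 + ↑(u ^ a.2) * (0 : R) = a.1; simp
    · show a.2 + (0 : ℤ) = a.2; omega
  inv_mul_cancel a := by
    rw [mul_def]
    refine Prod.ext ?_ ?_
    · show -(↑(u ^ (-a.2)) * a.1) + ↑(u ^ (-a.2)) * a.1 = (0 : R); simp
    · show -a.2 + a.2 = (0 : ℤ); omega

end SDP
/-- `R_λ = ℤ[λ, λ⁻¹]`, the smallest subring of `ℂ` containing `λ` and `λ⁻¹`. -/
def Rring (l : ℂ) : Subring ℂ := Subring.closure {l, l⁻¹}

/-- `λ` as a unit of `R_λ` (for `λ ≠ 0`). -/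
noncomputable def Runit (l : ℂ) (hl : l ≠ 0) : (Rring l)ˣ where
  val := ⟨l, Subring.subset_closure (by simp)⟩
  inv := ⟨l⁻¹, Subring.subset_closure (by simp)⟩
  val_inv := Subtype.ext (mul_inv_cancel₀ hl)
  inv_val := Subtype.ext (inv_mul_cancel₀ hl)

/-- `G(λ) = R_λ ⋊ ℤ`, where the generator `1 ∈ ℤ` acts by multiplication by `λ`:
the set `R_λ × ℤ` with multiplication `(r, k) · (r', k') = (r + λ^k r', k + k')`. -/
noncomputable def Gl (l : ℂ) (hl : l ≠ 0) : Type := SDP (Rring l) (Runit l hl)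

noncomputable instance (l : ℂ) (hl : l ≠ 0) : Group (Gl l hl) :=
  inferInstanceAs (Group (SDP (Rring l) (Runit l hl)))

/-!
Conjugate algebraic numbers `λ`, `μ` give an isomorphism `ℚ(λ) ≃ ℚ(μ)` with `λ ↦ μ`; since
`R_λ` and `R_μ` are the images of `ℤ[λ, λ⁻¹] ⊆ ℚ(λ)` under the two resulting embeddings into `ℂ`,
it restricts to a ring isomorphism `R_λ ≃ R_μ` carrying `λ` to `μ`, hence to `G(λ) ≃ G(μ)`.
For `μ⁻¹` note that `R_{μ⁻¹} = R_μ`, and `(r, k) ↦ (r, -k)` identifies `R ⋊_{u⁻¹} ℤ` with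
`R ⋊_u ℤ`.
-/

namespace SDP

variable {R S : Type*} [CommRing R] [CommRing S]

def congr {u : Rˣ} {v : Sˣ} (e : R ≃+* S) (he : e u = v) : SDP R u ≃* SDP S v where
  toFun g := ((e g.1, g.2) : S × ℤ)
  invFun g := ((e.symm g.1, g.2) : R × ℤ)
  left_inv g := Prod.ext (e.symm_apply_apply g.1) rfl
  right_inv g := Prod.ext (e.apply_symm_apply g.1) rfl
  map_mul' g h := by
    obtain rfl : Units.map (e : R →* S) u = v := Units.ext he
    refine Prod.ext ?_ rfl
    show e (g.1 + ((u ^ g.2 : Rˣ) : R) * h.1)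
      = e g.1 + ((Units.map (e : R →* S) u ^ g.2 : Sˣ) : S) * e h.1
    rw [← map_zpow, Units.coe_map, map_add, map_mul]
    rfl

def invEquiv (u : Rˣ) : SDP R u⁻¹ ≃* SDP R u where
  toFun g := ((g.1, -g.2) : R × ℤ)
  invFun g := ((g.1, -g.2) : R × ℤ)
  left_inv g := Prod.ext rfl (neg_neg g.2)
  right_inv g := Prod.ext rfl (neg_neg g.2)
  map_mul' g h := by
    show ((g.1 + ((u⁻¹ ^ g.2 : Rˣ) : R) * h.1, -(g.2 + h.2)) : R × ℤ)
      = ((g.1 + ((u ^ (-g.2) : Rˣ) : R) * h.1, -g.2 + -h.2) : R × ℤ)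
    rw [inv_zpow', neg_add]

end SDP

theorem Rring_inv (x : ℂ) : Rring x⁻¹ = Rring x := by
  rw [Rring, Rring, inv_inv, Set.pair_comm]

theorem Rring_apply_eq_map {K : Type*} [Field K] (f : K →+* ℂ) (a : K) :
    Rring (f a) = (Subring.closure {a, a⁻¹}).map f := by
  rw [RingHom.map_closure, Set.image_pair, map_inv₀, Rring]

noncomputable def Rring.ringEquivOfRingHom {K : Type*} [Field K] (f g : K →+* ℂ) (a : K) :
    Rring (f a) ≃+* Rring (g a) :=
  (RingEquiv.subringCongr (Rring_apply_eq_map f a)).trans <|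
    ((Subring.closure {a, a⁻¹}).equivMapOfInjective f f.injective).symm.trans <|
      ((Subring.closure {a, a⁻¹}).equivMapOfInjective g g.injective).trans
        (RingEquiv.subringCongr (Rring_apply_eq_map g a).symm)

theorem Rring.ringEquivOfRingHom_apply_self {K : Type*} [Field K] (f g : K →+* ℂ) (a : K) :
    (Rring.ringEquivOfRingHom f g a ⟨f a, Subring.subset_closure (Set.mem_insert _ _)⟩ : ℂ)
      = g a := by
  have hmem : a ∈ Subring.closure {a, a⁻¹} := Subring.subset_closure (Set.mem_insert a _)
  have hsymm : ((Subring.closure {a, a⁻¹}).equivMapOfInjective f f.injective).symm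
      ⟨f a, Subring.mem_map.mpr ⟨a, hmem, rfl⟩⟩ = ⟨a, hmem⟩ :=
    (RingEquiv.symm_apply_eq _).mpr rfl
  simp only [Rring.ringEquivOfRingHom, RingEquiv.trans_apply]
  exact congrArg (fun x => (g x : ℂ)) (congrArg Subtype.val hsymm)

noncomputable def Gl.mulEquivOfRingHom {K : Type*} [Field K] (f g : K →+* ℂ) (a : K) {l m : ℂ}
    (hl : l ≠ 0) (hm : m ≠ 0) (hfa : f a = l) (hga : g a = m) : Gl l hl ≃* Gl m hm := by
  subst hfa hga
  exact SDP.congr (Rring.ringEquivOfRingHom f g a)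
    (Subtype.ext (Rring.ringEquivOfRingHom_apply_self f g a))

noncomputable def Gl.invMulEquiv (m : ℂ) (hm : m ≠ 0) : Gl m⁻¹ (inv_ne_zero hm) ≃* Gl m hm :=
  (SDP.congr (RingEquiv.subringCongr (Rring_inv m)) rfl).trans (SDP.invEquiv (Runit m hm))

open IntermediateField in
theorem Gl.nonempty_mulEquiv_of_minpoly_eq {l m : ℂ} (hl : l ≠ 0) (hm : m ≠ 0)
    (hla : IsAlgebraic ℚ l) (hmin : minpoly ℚ l = minpoly ℚ m) :
    Nonempty (Gl l hl ≃* Gl m hm) :=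
  ⟨Gl.mulEquivOfRingHom (ℚ⟮l⟯.val : ℚ⟮l⟯ →+* ℂ)
    ((ℚ⟮m⟯.val : ℚ⟮m⟯ →+* ℂ).comp (minpoly.algEquiv hla hmin : ℚ⟮l⟯ →+* ℚ⟮m⟯))
    (AdjoinSimple.gen ℚ l) hl hm rfl
    (congrArg Subtype.val (minpoly.algEquiv_apply hla hmin))⟩

theorem Gl_iso_of_minpoly_eq_general
    (l m : ℂ) (hl : l ≠ 0) (hm : m ≠ 0)
    (hla : IsAlgebraic ℚ l)
    (hmin : minpoly ℚ l = minpoly ℚ m ∨ minpoly ℚ l = minpoly ℚ m⁻¹) :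
    Nonempty (Gl l hl ≃* Gl m hm) := by
  rcases hmin with h | h
  · exact Gl.nonempty_mulEquiv_of_minpoly_eq hl hm hla h
  · obtain ⟨e⟩ := Gl.nonempty_mulEquiv_of_minpoly_eq hl (inv_ne_zero hm) hla h
    exact ⟨e.trans (Gl.invMulEquiv m hm)⟩

/-- If `λ` and `μ` are nonzero algebraic numbers and `λ` has the same minimal polynomial
over `ℚ` as `μ` or as `μ⁻¹`, then the groups `G(λ)` and `G(μ)` are isomorphic. -/
theorem Gl_iso_of_minpoly_eq
    (l m : ℂ) (hl : l ≠ 0) (hm : m ≠ 0)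
    (hla : IsAlgebraic ℚ l) (hma : IsAlgebraic ℚ m)
    (hmin : minpoly ℚ l = minpoly ℚ m ∨ minpoly ℚ l = minpoly ℚ m⁻¹) :
    Nonempty (Gl l hl ≃* Gl m hm) :=
  Gl_iso_of_minpoly_eq_general l m hl hm hla hmin
end

section
/- Let g = (r,k) and h = (r',k') be elements of G = R ⋊_λ ℤ. The pair (g,h) generates G if and only if the integers k and k' are coprime and Δ(g,h) = r'·δ(k) − r·δ(k') is a unit of R. -/
/-- `δ(k) = ∑_{0 ≤ i < k} λ^i` for `k ≥ 0` and `δ(k) = -∑_{k ≤ i < 0} λ^i` for `k < 0`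
(so that `(λ - 1) δ(k) = λ^k - 1`). -/
def sdpDelta {R : Type*} [CommRing R] (u : Rˣ) (k : ℤ) : R :=
  if 0 ≤ k then ∑ i ∈ Finset.range k.toNat, (u : R) ^ i
  else -∑ i ∈ Finset.range (-k).toNat, ((u ^ (k + (i : ℤ)) : Rˣ) : R)

/-- `Δ((r,k), (r',k')) = r' δ(k) - r δ(k')`. -/
def sdpDeltaPair {R : Type*} [CommRing R] (u : Rˣ) (g h : SDP R u) : R :=
  h.1 * sdpDelta u g.2 - g.1 * sdpDelta u h.2

/-!
`δ` is a 1-cocycle, `δ(m + n) = δ(m) + λ^m δ(n)`, with `(λ - 1) δ(k) = λ^k - 1` and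
`δ(k) ≡ k` modulo `λ - 1`.

If `Δ(g, h)` lies in a maximal ideal `𝔪`, then, `k` and `k'` being coprime and `δ(1) = 1`, one of
`δ(k)`, `δ(k')` is invertible modulo `𝔪`, and `g`, `h` both lie in the proper subgroup
`{(r, k) | r ≡ c δ(k) mod 𝔪}` for a suitable `c`.

Conversely, let `N = {x | (x, 0) ∈ ⟨g, h⟩}`. Conjugating by an element of degree `±1` multiplies
`N` by `λ^{±1}`, so `N` is an ideal. The commutator `[g, h] = ((λ - 1) Δ, 0)` puts `λ - 1` in `N`,
and `g^{k'} h^{-k} = (z, 0)` with `z ≡ -Δ` modulo `λ - 1` then puts `Δ`, hence `1`, in `N`.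
-/

open Ideal

section

variable {R : Type*} [CommRing R] {u : Rˣ}

theorem val_zpow_mul_val_zpow_neg (k : ℤ) : ((u ^ k : Rˣ) : R) * ((u ^ (-k) : Rˣ) : R) = 1 := by
  rw [zpow_neg, Units.mul_inv]

theorem sdpDelta_natCast (n : ℕ) : sdpDelta u n = ∑ i ∈ Finset.range n, (u : R) ^ i := by
  simp [sdpDelta]

theorem sdpDelta_neg_natCast (n : ℕ) :
    sdpDelta u (-n) = -∑ i ∈ Finset.range n, ((u ^ (-(n : ℤ) + i) : Rˣ) : R) := by
  unfold sdpDelta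
  split_ifs with hn
  · obtain rfl : n = 0 := by omega
    simp
  · simp

theorem sdpDelta_add_one (k : ℤ) :
    sdpDelta u (k + 1) = sdpDelta u k + ((u ^ k : Rˣ) : R) := by
  rcases k with n | n
  · rw [Int.ofNat_eq_natCast, ← Nat.cast_succ, sdpDelta_natCast, sdpDelta_natCast,
      Finset.sum_range_succ, zpow_natCast, Units.val_pow_eq_pow_val]
  · rw [Int.negSucc_eq, show -((n : ℤ) + 1) + 1 = -n by ring, ← Nat.cast_succ,
      sdpDelta_neg_natCast, sdpDelta_neg_natCast, Finset.sum_range_succ']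
    push_cast
    simp only [show ∀ i : ℕ, -((n : ℤ) + 1) + (i + 1) = -n + i from fun i => by ring, add_zero]
    ring

theorem sdpDelta_sub_one (k : ℤ) :
    sdpDelta u (k - 1) = sdpDelta u k - ((u ^ (k - 1) : Rˣ) : R) := by
  rw [eq_sub_iff_add_eq, ← sdpDelta_add_one, sub_add_cancel]

theorem sdpDelta_zero : sdpDelta u 0 = 0 := by simp [sdpDelta]

theorem sdpDelta_one : sdpDelta u 1 = 1 := by
  simpa [sdpDelta_zero] using sdpDelta_add_one (u := u) 0

theorem sdpDelta_add (m n : ℤ) :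
    sdpDelta u (m + n) = sdpDelta u m + ((u ^ m : Rˣ) : R) * sdpDelta u n := by
  induction n using Int.induction_on with
  | zero => simp [sdpDelta_zero]
  | succ n ih =>
    rw [← add_assoc, sdpDelta_add_one, ih, sdpDelta_add_one, zpow_add, Units.val_mul]
    ring
  | pred n ih =>
    rw [← add_sub_assoc, sdpDelta_sub_one, ih, sdpDelta_sub_one, add_sub_assoc m, zpow_add,
      Units.val_mul]
    ring

theorem sdpDelta_neg (k : ℤ) :
    sdpDelta u (-k) = -((u ^ (-k) : Rˣ) : R) * sdpDelta u k := by
  have h := sdpDelta_add (u := u) (-k) k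
  rw [neg_add_cancel, sdpDelta_zero] at h
  linear_combination -h

theorem sub_one_mul_sdpDelta (k : ℤ) :
    ((u : R) - 1) * sdpDelta u k = ((u ^ k : Rˣ) : R) - 1 := by
  have h := sdpDelta_add (u := u) 1 k
  rw [add_comm, sdpDelta_add, sdpDelta_one, zpow_one] at h
  linear_combination -h

theorem mk_units_zpow (k : ℤ) :
    Ideal.Quotient.mk (span {(u : R) - 1}) ((u ^ k : Rˣ) : R) = 1 := by
  rw [← map_one (Ideal.Quotient.mk _), Ideal.Quotient.eq]
  exact mem_span_singleton'.mpr ⟨sdpDelta u k, by rw [mul_comm, sub_one_mul_sdpDelta]⟩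

theorem mk_sdpDelta (k : ℤ) :
    Ideal.Quotient.mk (span {(u : R) - 1}) (sdpDelta u k) = k := by
  induction k using Int.induction_on with
  | zero => simp [sdpDelta_zero]
  | succ n ih => rw [sdpDelta_add_one, map_add, ih, mk_units_zpow]; push_cast; rfl
  | pred n ih => rw [sdpDelta_sub_one, map_sub, ih, mk_units_zpow]; push_cast; rfl

theorem sdpDelta_mem_of_mem_closure {I : Ideal R} {k k' n : ℤ} (hk : sdpDelta u k ∈ I)
    (hk' : sdpDelta u k' ∈ I) (hn : n ∈ AddSubgroup.closure {k, k'}) : sdpDelta u n ∈ I := by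
  induction hn using AddSubgroup.closure_induction with
  | mem x hx =>
    rcases hx with rfl | rfl
    exacts [hk, hk']
  | zero => simp [sdpDelta_zero]
  | add x y _ _ hx hy => rw [sdpDelta_add]; exact I.add_mem hx (I.mul_mem_left _ hy)
  | neg x _ hx => rw [sdpDelta_neg]; exact I.mul_mem_left _ hx

theorem sdpDelta_notMem_or_of_isCoprime {I : Ideal R} (hI : I ≠ ⊤) {k k' : ℤ}
    (hkk' : IsCoprime k k') : sdpDelta u k ∉ I ∨ sdpDelta u k' ∉ I := by
  by_contra! hmem
  obtain ⟨a, b, hab⟩ := hkk'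
  have hone : (1 : ℤ) ∈ AddSubgroup.closure {k, k'} :=
    AddSubgroup.mem_closure_pair.mpr ⟨a, b, by simpa [mul_comm] using hab⟩
  have := sdpDelta_mem_of_mem_closure hmem.1 hmem.2 hone
  rw [sdpDelta_one] at this
  exact hI ((I.eq_top_iff_one).mpr this)

theorem sdpDeltaPair_swap (g h : SDP R u) : sdpDeltaPair u h g = -sdpDeltaPair u g h := by
  rw [sdpDeltaPair, sdpDeltaPair]; ring

namespace SDP

@[simp] theorem fst_mul (g h : SDP R u) : (g * h).1 = g.1 + ((u ^ g.2 : Rˣ) : R) * h.1 := rfl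
@[simp] theorem snd_mul (g h : SDP R u) : (g * h).2 = g.2 + h.2 := rfl
@[simp] theorem fst_one : (1 : SDP R u).1 = 0 := rfl
@[simp] theorem snd_one : (1 : SDP R u).2 = 0 := rfl
@[simp] theorem fst_inv (g : SDP R u) : g⁻¹.1 = -(((u ^ (-g.2) : Rˣ) : R) * g.1) := rfl
@[simp] theorem snd_inv (g : SDP R u) : g⁻¹.2 = -g.2 := rfl

theorem snd_zpow (g : SDP R u) (n : ℤ) : (g ^ n).2 = n * g.2 := by
  induction n using Int.induction_on with
  | zero => simp
  | succ n ih => rw [zpow_add_one, snd_mul, ih]; ring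
  | pred n ih => rw [zpow_sub_one, snd_mul, snd_inv, ih]; ring

/-- Reduction modulo `λ - 1`, where `λ` acts trivially. -/
def fstMod : SDP R u →* Multiplicative (R ⧸ span {(u : R) - 1}) where
  toFun g := .ofAdd (Ideal.Quotient.mk _ g.1)
  map_one' := by simp
  map_mul' g h := by simp [mk_units_zpow]

theorem mk_fst_mul (g h : SDP R u) :
    Ideal.Quotient.mk (span {(u : R) - 1}) (g * h).1
      = Ideal.Quotient.mk _ g.1 + Ideal.Quotient.mk _ h.1 :=
  congrArg Multiplicative.toAdd (map_mul fstMod g h)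

theorem mk_fst_zpow (g : SDP R u) (n : ℤ) :
    Ideal.Quotient.mk (span {(u : R) - 1}) (g ^ n).1 = n • Ideal.Quotient.mk _ g.1 :=
  congrArg Multiplicative.toAdd (map_zpow fstMod g n)

def inl (x : R) : SDP R u := (x, 0)

theorem inl_zero : (inl 0 : SDP R u) = 1 := rfl

@[simp] theorem fst_inl (x : R) : (inl x : SDP R u).1 = x := rfl
@[simp] theorem snd_inl (x : R) : (inl x : SDP R u).2 = 0 := rfl

theorem inl_add (x y : R) : (inl (x + y) : SDP R u) = inl x * inl y :=
  Prod.ext (by simp) (by simp)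

theorem inl_neg (x : R) : (inl (-x) : SDP R u) = (inl x)⁻¹ :=
  Prod.ext (by simp) (by simp)

theorem inl_fst_of_snd_eq_zero {w : SDP R u} (hw : w.2 = 0) : inl w.1 = w :=
  Prod.ext rfl hw.symm

theorem inl_sub_mul_of_snd_eq {v w : SDP R u} (h : v.2 = w.2) : inl (w.1 - v.1) * v = w :=
  Prod.ext (by simp) (by simp [h])

theorem mul_inl_mul_inv (w : SDP R u) (x : R) :
    w * inl x * w⁻¹ = inl (((u ^ w.2 : Rˣ) : R) * x) := by
  refine Prod.ext ?_ (by simp)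
  simp only [fst_mul, snd_mul, fst_inv, fst_inl, snd_inl, add_zero]
  linear_combination (-w.1) * val_zpow_mul_val_zpow_neg (u := u) w.2

theorem commutator_eq_inl (g h : SDP R u) :
    g * h * (h * g)⁻¹ = inl (((u : R) - 1) * sdpDeltaPair u g h) := by
  refine Prod.ext ?_ (by simp; ring)
  simp only [fst_mul, snd_mul, fst_inv, fst_inl, sdpDeltaPair, add_comm h.2 g.2]
  linear_combination
    (-(h.1 + ((u ^ h.2 : Rˣ) : R) * g.1)) * val_zpow_mul_val_zpow_neg (u := u) (g.2 + h.2)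
    - h.1 * sub_one_mul_sdpDelta (u := u) g.2 + g.1 * sub_one_mul_sdpDelta (u := u) h.2

/-- The preimage modulo `I` of the complement `{(c δ(k), k)}` of `R ⧸ I` in `(R ⧸ I) ⋊ ℤ`. -/
def deltaGraphMod (I : Ideal R) (c : R) : Subgroup (SDP R u) where
  carrier := {w | w.1 - c * sdpDelta u w.2 ∈ I}
  one_mem' := by simp [sdpDelta_zero]
  mul_mem' {v w} hv hw := by
    have key : (v * w).1 - c * sdpDelta u (v * w).2
        = (v.1 - c * sdpDelta u v.2) + ((u ^ v.2 : Rˣ) : R) * (w.1 - c * sdpDelta u w.2) := by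
      rw [fst_mul, snd_mul, sdpDelta_add]; ring
    rw [Set.mem_ofPred_eq, key]
    exact I.add_mem hv (I.mul_mem_left _ hw)
  inv_mem' {w} hw := by
    have key : w⁻¹.1 - c * sdpDelta u w⁻¹.2
        = -((u ^ (-w.2) : Rˣ) : R) * (w.1 - c * sdpDelta u w.2) := by
      rw [fst_inv, snd_inv, sdpDelta_neg]; ring
    rw [Set.mem_ofPred_eq, key]
    exact I.mul_mem_left _ hw

theorem mem_deltaGraphMod {I : Ideal R} {c : R} {w : SDP R u} :
    w ∈ deltaGraphMod I c ↔ w.1 - c * sdpDelta u w.2 ∈ I :=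
  Iff.rfl

theorem inl_one_mem_deltaGraphMod_iff {I : Ideal R} {c : R} :
    inl 1 ∈ (deltaGraphMod I c : Subgroup (SDP R u)) ↔ I = ⊤ := by
  simp [mem_deltaGraphMod, sdpDelta_zero, I.eq_top_iff_one]

theorem snd_mem_span_of_mem_closure {g h w : SDP R u} (hw : w ∈ Subgroup.closure {g, h}) :
    w.2 ∈ span {g.2, h.2} := by
  induction hw using Subgroup.closure_induction with
  | mem x hx =>
    rcases hx with rfl | rfl
    exacts [subset_span (by simp), subset_span (by simp)]
  | one => exact zero_mem _
  | mul x y _ _ hx hy => exact add_mem hx hy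
  | inv x _ hx => exact neg_mem hx

theorem isCoprime_of_closure_eq_top {g h : SDP R u} (htop : Subgroup.closure {g, h} = ⊤) :
    IsCoprime g.2 h.2 := by
  have hone : (show SDP R u from (0, 1)) ∈ Subgroup.closure {g, h} := htop ▸ Subgroup.mem_top _
  obtain ⟨a, b, hab⟩ := mem_span_pair.mp (snd_mem_span_of_mem_closure hone)
  exact ⟨a, b, hab⟩

theorem exists_mem_deltaGraphMod_of_sdpDelta_notMem {m : Ideal R} (hm : m.IsMaximal)
    {g h : SDP R u} (hΔ : sdpDeltaPair u g h ∈ m) (hg : sdpDelta u g.2 ∉ m) :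
    ∃ c, g ∈ deltaGraphMod m c ∧ h ∈ deltaGraphMod m c := by
  obtain ⟨e, i, hi, he⟩ := hm.exists_inv hg
  refine ⟨g.1 * e, ?_, ?_⟩
  · have key : g.1 - g.1 * e * sdpDelta u g.2 = g.1 * i := by linear_combination -g.1 * he
    rw [mem_deltaGraphMod, key]
    exact m.mul_mem_left _ hi
  · have key : h.1 - g.1 * e * sdpDelta u h.2 = e * sdpDeltaPair u g h + h.1 * i := by
      rw [sdpDeltaPair]; linear_combination -h.1 * he
    rw [mem_deltaGraphMod, key]
    exact m.add_mem (m.mul_mem_left _ hΔ) (m.mul_mem_left _ hi)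

theorem isUnit_sdpDeltaPair_of_closure_eq_top {g h : SDP R u}
    (htop : Subgroup.closure {g, h} = ⊤) : IsUnit (sdpDeltaPair u g h) := by
  by_contra hΔ
  obtain ⟨m, hm, hΔm⟩ := exists_max_ideal_of_mem_nonunits hΔ
  obtain ⟨c, hgc, hhc⟩ : ∃ c, g ∈ deltaGraphMod m c ∧ h ∈ deltaGraphMod m c := by
    rcases sdpDelta_notMem_or_of_isCoprime hm.ne_top (isCoprime_of_closure_eq_top htop)
      with hg | hh
    · exact exists_mem_deltaGraphMod_of_sdpDelta_notMem hm hΔm hg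
    · have hΔm' : sdpDeltaPair u h g ∈ m := by rw [sdpDeltaPair_swap]; exact neg_mem hΔm
      exact (exists_mem_deltaGraphMod_of_sdpDelta_notMem hm hΔm' hh).imp fun _ => And.symm
  have hle : Subgroup.closure {g, h} ≤ deltaGraphMod m c :=
    (Subgroup.closure_le _).mpr (Set.insert_subset hgc (Set.singleton_subset_iff.mpr hhc))
  exact hm.ne_top (inl_one_mem_deltaGraphMod_iff.mp (hle (htop ▸ Subgroup.mem_top _)))

theorem fst_zpow_mul_zpow_add_sdpDeltaPair_mem (g h : SDP R u) :
    (g ^ h.2 * h ^ (-g.2)).1 + sdpDeltaPair u g h ∈ span {(u : R) - 1} := by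
  rw [← Ideal.Quotient.eq_zero_iff_mem, map_add, mk_fst_mul, mk_fst_zpow, mk_fst_zpow,
    sdpDeltaPair, map_sub, map_mul, map_mul, mk_sdpDelta, mk_sdpDelta]
  push_cast [zsmul_eq_mul]
  ring

theorem snd_zpow_mul_zpow (g h : SDP R u) : (g ^ h.2 * h ^ (-g.2)).2 = 0 := by
  rw [snd_mul, snd_zpow, snd_zpow]; ring

theorem inl_mul_mem {H : Subgroup (SDP R u)}
    (hgen : Subring.closure ({(u : R), ((u⁻¹ : Rˣ) : R)} : Set R) = ⊤)
    {w₀ : SDP R u} (hw₀ : w₀ ∈ H) (hw₀1 : w₀.2 = 1) (r : R) {x : R} (hx : inl x ∈ H) :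
    inl (r * x) ∈ H := by
  have hr : r ∈ Subring.closure ({(u : R), ((u⁻¹ : Rˣ) : R)} : Set R) :=
    hgen ▸ Subring.mem_top r
  induction hr using Subring.closure_induction generalizing x with
  | mem s hs =>
    rcases hs with rfl | rfl
    · have := mul_mem (mul_mem hw₀ hx) (inv_mem hw₀)
      rwa [mul_inl_mul_inv, hw₀1, zpow_one] at this
    · have := mul_mem (mul_mem (inv_mem hw₀) hx) (inv_mem (inv_mem hw₀))
      rwa [mul_inl_mul_inv, snd_inv, hw₀1, zpow_neg_one] at this
  | zero => rw [zero_mul, inl_zero]; exact one_mem H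
  | one => rwa [one_mul]
  | add a b _ _ ha hb => rw [add_mul, inl_add]; exact mul_mem (ha hx) (hb hx)
  | neg a _ ha => rw [neg_mul, inl_neg]; exact inv_mem (ha hx)
  | mul a b _ _ ha hb => rw [mul_assoc]; exact ha (hb hx)

theorem eq_top_of_forall_inl_mem {H : Subgroup (SDP R u)} {w₀ : SDP R u} (hw₀ : w₀ ∈ H)
    (hw₀1 : w₀.2 = 1) (hinl : ∀ x, inl x ∈ H) : H = ⊤ := by
  refine eq_top_iff.mpr fun w _ => ?_
  have hpow : (w₀ ^ w.2).2 = w.2 := by rw [snd_zpow, hw₀1, mul_one]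
  rw [← inl_sub_mul_of_snd_eq hpow]
  exact mul_mem (hinl _) (zpow_mem hw₀ _)

theorem closure_eq_top_of_isCoprime_of_isUnit
    (hgen : Subring.closure ({(u : R), ((u⁻¹ : Rˣ) : R)} : Set R) = ⊤) {g h : SDP R u}
    (hcop : IsCoprime g.2 h.2) (hΔ : IsUnit (sdpDeltaPair u g h)) :
    Subgroup.closure {g, h} = ⊤ := by
  set H := Subgroup.closure {g, h}
  have hg : g ∈ H := Subgroup.subset_closure (by simp)
  have hh : h ∈ H := Subgroup.subset_closure (by simp)
  obtain ⟨a, b, hab⟩ := hcop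
  have hw₀ : g ^ a * h ^ b ∈ H := mul_mem (zpow_mem hg a) (zpow_mem hh b)
  have hw₀1 : (g ^ a * h ^ b).2 = 1 := by rw [snd_mul, snd_zpow, snd_zpow, hab]
  have hmul := inl_mul_mem hgen hw₀ hw₀1
  obtain ⟨v, hv⟩ := hΔ
  have hdiv : ∀ {x : R}, inl (sdpDeltaPair u g h * x) ∈ H → inl x ∈ H := fun hx => by
    simpa [← mul_assoc, ← hv] using hmul ((v⁻¹ : Rˣ) : R) hx
  have hsub : inl ((u : R) - 1) ∈ H := by
    refine hdiv ?_
    rw [mul_comm, ← commutator_eq_inl]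
    exact mul_mem (mul_mem hg hh) (inv_mem (mul_mem hh hg))
  have hz : inl (g ^ h.2 * h ^ (-g.2)).1 ∈ H := by
    rw [inl_fst_of_snd_eq_zero (snd_zpow_mul_zpow g h)]
    exact mul_mem (zpow_mem hg _) (zpow_mem hh _)
  obtain ⟨e, he⟩ := mem_span_singleton'.mp (fst_zpow_mul_zpow_add_sdpDeltaPair_mem g h)
  have hΔmem : inl (sdpDeltaPair u g h) ∈ H := by
    have := mul_mem (inv_mem hz) (hmul e hsub)
    rwa [← inl_neg, ← inl_add, he, neg_add_cancel_left] at this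
  have hone : inl 1 ∈ H := hdiv (by rwa [mul_one])
  exact eq_top_of_forall_inl_mem hw₀ hw₀1 fun x => by simpa using hmul x hone

end SDP

end

theorem sdp_generating_pair_iff_general
    {R : Type*} [CommRing R] (u : Rˣ)
    (hgen : Subring.closure ({(u : R), ((u⁻¹ : Rˣ) : R)} : Set R) = ⊤)
    (g h : SDP R u) :
    Subgroup.closure ({g, h} : Set (SDP R u)) = ⊤ ↔
      IsCoprime g.2 h.2 ∧ IsUnit (sdpDeltaPair u g h) :=
  ⟨fun htop => ⟨SDP.isCoprime_of_closure_eq_top htop,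
      SDP.isUnit_sdpDeltaPair_of_closure_eq_top htop⟩,
    fun ⟨hcop, hΔ⟩ => SDP.closure_eq_top_of_isCoprime_of_isUnit hgen hcop hΔ⟩

/-- Let `R` be a commutative ring generated by a unit `λ ≠ 1` and its inverse, and let
`G = R ⋊_λ ℤ`.  A pair `(g, h) = ((r, k), (r', k'))` of elements of `G` generates `G` if and
only if `k` and `k'` are coprime and `Δ(g, h) = r' δ(k) - r δ(k')` is a unit of `R`. -/
theorem sdp_generating_pair_iff
    {R : Type*} [CommRing R] (u : Rˣ) (hu : (u : R) ≠ 1)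
    (hgen : Subring.closure ({(u : R), ((u⁻¹ : Rˣ) : R)} : Set R) = ⊤)
    (g h : SDP R u) :
    Subgroup.closure ({g, h} : Set (SDP R u)) = ⊤ ↔
      IsCoprime g.2 h.2 ∧ IsUnit (sdpDeltaPair u g h) :=
  sdp_generating_pair_iff_general u hgen g h
end

section
/- Let G be a group generated by two elements which either (a) possesses a normal abelian subgroup A such that the quotient G/A is infinite cyclic, or (b) is metabelian (its derived subgroup is abelian) with abelianization isomorphic to ℤ². Then the automorphism group of the free group F₂ of rank 2 acts transitively on the Aut(G)-orbits of generating pairs of G: for any two surjective group homomorphisms p, q from F₂ onto G, there exist an automorphism ψ of F₂ and an automorphism φ of G such that q = φ ∘ p ∘ ψ. -/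
/-!
In both cases `G` has a surjection `π` onto `Q = ℤ` or `Q = ℤ²` with abelian kernel `A`.
Euclid's algorithm, performed by Nielsen moves, turns `π ∘ p` and `π ∘ q` into the same
standard map `σ : F₂ → Q`, whose kernel is the normal closure of a single element `t`
(`t = b`, resp. `t = [a, b]`, for the free generators `a`, `b`).  Then `p` and `q` agree
modulo `A`, so `p c` and `q c` act in the same way on `A` by conjugation, and these actions
commute since `G / A` is abelian.  As `q t ∈ A = ⟨⟨p t⟩⟩`, there is a conjugation-equivariant
endomorphism `θ` of `A` with `θ (p t) = q t`, and equivariance gives `q = θ ∘ p` on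
`⟨⟨t⟩⟩ ⊇ ker p`.  Hence `ker p ≤ ker q`, by symmetry the kernels agree, and `q` factors
as `φ ∘ p`.
-/

open Function Subgroup
open scoped commutatorElement IsMulCommutative

section AbelianNormalSubgroup

variable {G : Type*} [Group G] (A : Subgroup G) [A.Normal] [IsMulCommutative A]

theorem conjNormal_apply_eq_of_mul_inv_mem {g g' : G} (h : g * g'⁻¹ ∈ A) (a : A) :
    MulAut.conjNormal g a = MulAut.conjNormal g' a := by
  have ha' : g' * a * g'⁻¹ ∈ A := ‹A.Normal›.conj_mem a a.2 g'
  ext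
  calc g * a * g⁻¹ = (g * g'⁻¹) * (g' * a * g'⁻¹) * (g * g'⁻¹)⁻¹ := by group
    _ = g' * a * g'⁻¹ := by rw [setLike_mul_comm h ha']; group

def conjEquivariantEnd : Subgroup (A →* A) where
  carrier := {θ | ∀ (g : G) (a : A), θ (MulAut.conjNormal g a) = MulAut.conjNormal g (θ a)}
  mul_mem' hθ hθ' g a := by simp only [MonoidHom.mul_apply, map_mul, hθ g a, hθ' g a]
  one_mem' g a := by simp only [MonoidHom.one_apply, map_one]
  inv_mem' hθ g a := by simp only [MonoidHom.inv_apply, map_inv, hθ g a]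

variable {A}

theorem conjNormal_mem_conjEquivariantEnd (hA : commutator G ≤ A) (c : G) :
    (MulAut.conjNormal c).toMonoidHom ∈ conjEquivariantEnd A := by
  intro g a
  have hcg : c * g * (g * c)⁻¹ ∈ A := by
    simpa [commutatorElement_def, mul_assoc] using
      hA (commutator_mem_commutator (mem_top c) (mem_top g))
  simp only [MulEquiv.coe_toMonoidHom, ← MulAut.mul_apply, ← map_mul]
  exact conjNormal_apply_eq_of_mul_inv_mem A hcg a

theorem exists_mem_conjEquivariantEnd_apply_eq (hA : commutator G ≤ A) {s x : G} (hs : s ∈ A)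
    (hx : x ∈ normalClosure {s}) : ∃ θ ∈ conjEquivariantEnd A, (θ ⟨s, hs⟩ : G) = x := by
  induction hx using closure_induction with
  | mem x hx =>
    obtain ⟨_, rfl, hconj⟩ := Group.mem_conjugatesOfSet_iff.mp hx
    obtain ⟨c, rfl⟩ := isConj_iff.mp hconj
    exact ⟨_, conjNormal_mem_conjEquivariantEnd hA c, MulAut.conjNormal_apply c _⟩
  | one => exact ⟨1, one_mem _, rfl⟩
  | mul x y _ _ ihx ihy =>
    obtain ⟨θ, hθ, rfl⟩ := ihx
    obtain ⟨θ', hθ', rfl⟩ := ihy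
    exact ⟨θ * θ', mul_mem hθ hθ', rfl⟩
  | inv x _ ihx =>
    obtain ⟨θ, hθ, rfl⟩ := ihx
    exact ⟨θ⁻¹, inv_mem hθ, rfl⟩

theorem exists_apply_eq_of_mem_normalClosure {H : Type*} [Group H] {p q : H →* G}
    (hpq : ∀ h, p h * (q h)⁻¹ ∈ A) {θ : A →* A} (hθ : θ ∈ conjEquivariantEnd A) {t : H}
    (a₀ : A) (hp : (a₀ : G) = p t) (hq : (θ a₀ : G) = q t) {w : H}
    (hw : w ∈ normalClosure {t}) : ∃ a : A, (a : G) = p w ∧ (θ a : G) = q w := by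
  induction hw using closure_induction with
  | mem x hx =>
    obtain ⟨_, rfl, hconj⟩ := Group.mem_conjugatesOfSet_iff.mp hx
    obtain ⟨c, rfl⟩ := isConj_iff.mp hconj
    refine ⟨MulAut.conjNormal (p c) a₀, ?_, ?_⟩
    · simp [MulAut.conjNormal_apply, hp]
    · rw [hθ, conjNormal_apply_eq_of_mul_inv_mem A (hpq c), MulAut.conjNormal_apply, hq]
      simp
  | one => exact ⟨1, by simp, by simp⟩
  | mul x y _ _ ihx ihy =>
    obtain ⟨a, hap, haq⟩ := ihx
    obtain ⟨b, hbp, hbq⟩ := ihy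
    exact ⟨a * b, by simp [hap, hbp], by simp [haq, hbq]⟩
  | inv x _ ihx =>
    obtain ⟨a, hap, haq⟩ := ihx
    exact ⟨a⁻¹, by simp [hap], by simp [haq]⟩

theorem ker_le_ker_of_mul_inv_mem (hA : commutator G ≤ A) {H : Type*} [Group H]
    {p q : H →* G} (hpq : ∀ h, p h * (q h)⁻¹ ∈ A) {t : H} (hpt : p t ∈ A)
    (hker : p.ker ≤ normalClosure {t}) (hqt : q t ∈ normalClosure {p t}) : p.ker ≤ q.ker := by
  obtain ⟨θ, hθ, hθt⟩ := exists_mem_conjEquivariantEnd_apply_eq hA hpt hqt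
  intro w hw
  obtain ⟨a, hap, haq⟩ := exists_apply_eq_of_mem_normalClosure hpq hθ _ rfl hθt (hker hw)
  have ha : a = 1 := Subtype.ext (hap.trans hw)
  rw [MonoidHom.mem_ker, ← haq, ha, map_one, OneMemClass.coe_one]

end AbelianNormalSubgroup

theorem ker_le_ker_of_comp_eq {G H Q : Type*} [Group G] [Group H] [CommGroup Q] (π : G →* Q)
    [IsMulCommutative π.ker] {p q : H →* G} (hp : Surjective p) (hpq : π.comp p = π.comp q)
    {t : H} (ht : (π.comp p).ker = normalClosure {t}) : p.ker ≤ q.ker := by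
  have hcongr : ∀ h, p h * (q h)⁻¹ ∈ π.ker := fun h => by
    rw [MonoidHom.mem_ker, map_mul, map_inv, ← MonoidHom.comp_apply, hpq, MonoidHom.comp_apply,
      mul_inv_cancel]
  have hpt : p t ∈ π.ker := by
    change t ∈ (π.comp p).ker
    rw [ht]; exact subset_normalClosure rfl
  have hker_eq : π.ker = normalClosure {p t} := by
    rw [← Set.image_singleton, ← map_normalClosure _ _ hp, ← ht, ← MonoidHom.comap_ker,
      map_comap_eq_self_of_surjective hp]
  refine ker_le_ker_of_mul_inv_mem (Abelianization.commutator_subset_ker π) hcongr hpt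
    (ht ▸ fun w hw => ?_) (hker_eq ▸ ?_)
  · simp [MonoidHom.mem_ker.mp hw]
  · rw [MonoidHom.mem_ker, ← MonoidHom.comp_apply, ← hpq]; exact hpt

open QuotientGroup in
theorem exists_mulEquiv_apply_eq_of_ker_eq {H G : Type*} [Group H] [Group G] {p q : H →* G}
    (hp : Surjective p) (hq : Surjective q) (h : p.ker = q.ker) :
    ∃ φ : G ≃* G, ∀ w, φ (p w) = q w := by
  refine ⟨(quotientKerEquivOfSurjective p hp).symm.trans
    ((quotientMulEquivOfEq h).trans (quotientKerEquivOfSurjective q hq)), fun w => ?_⟩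
  have hw : (quotientKerEquivOfSurjective p hp).symm (p w) = w := (MulEquiv.symm_apply_eq _).2 rfl
  simp only [MulEquiv.trans_apply, hw]
  rfl

theorem ker_eq_of_comp_eq_mk' {H Q : Type*} [Group H] [Group Q] {N : Subgroup H} [N.Normal]
    {σ : H →* Q} (ρ : Q →* H ⧸ N) (hρ : ρ.comp σ = QuotientGroup.mk' N) (hN : N ≤ σ.ker) :
    σ.ker = N :=
  le_antisymm (fun w hw => (QuotientGroup.eq_one_iff w).mp <| by
    simpa [MonoidHom.mem_ker.mp hw] using congr($hρ w).symm) hN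

def NielsenEquivalent {α M : Type*} [Group M] (u v : FreeGroup α →* M) : Prop :=
  ∃ ψ : FreeGroup α ≃* FreeGroup α, u.comp ψ.toMonoidHom = v

namespace NielsenEquivalent

variable {α M : Type*} [Group M] {u v w : FreeGroup α →* M}

theorem refl (u : FreeGroup α →* M) : NielsenEquivalent u u := ⟨MulEquiv.refl _, rfl⟩

theorem trans : NielsenEquivalent u v → NielsenEquivalent v w → NielsenEquivalent u w
  | ⟨ψ, h⟩, ⟨ψ', h'⟩ => ⟨ψ'.trans ψ, by rw [← h', ← h]; rfl⟩

theorem comp_mulEquiv (u : FreeGroup α →* M) (ψ : FreeGroup α ≃* FreeGroup α) :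
    NielsenEquivalent u (u.comp ψ.toMonoidHom) := ⟨ψ, rfl⟩

theorem surjective (h : NielsenEquivalent u v) (hu : Surjective u) : Surjective v := by
  obtain ⟨ψ, rfl⟩ := h; exact hu.comp ψ.surjective

end NielsenEquivalent

namespace FreeGroup

variable {α : Type*} [DecidableEq α]

def transvection {i j : α} (hij : i ≠ j) (k : ℤ) : FreeGroup α ≃* FreeGroup α :=
  MonoidHom.toMulEquiv (lift (update of i (of i * of j ^ k)))
    (lift (update of i (of i * of j ^ (-k))))
    (ext_hom _ _ fun l => by
      rcases eq_or_ne l i with rfl | hl <;> simp [*, hij.symm])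
    (ext_hom _ _ fun l => by
      rcases eq_or_ne l i with rfl | hl <;> simp [*, hij.symm])

@[simp] theorem transvection_of_self {i j : α} (hij : i ≠ j) (k : ℤ) :
    transvection hij k (of i) = of i * of j ^ k := by simp [transvection]

@[simp] theorem transvection_of_of_ne {i j l : α} (hij : i ≠ j) (k : ℤ) (hl : l ≠ i) :
    transvection hij k (of l) = of l := by simp [transvection, hl]

def zpowGenerator (i : α) (e : ℤˣ) : FreeGroup α ≃* FreeGroup α :=
  MonoidHom.toMulEquiv (lift (update of i (of i ^ (e : ℤ)))) (lift (update of i (of i ^ (e : ℤ))))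
    (ext_hom _ _ fun l => by
      rcases eq_or_ne l i with rfl | hl <;> simp [*, ← zpow_mul])
    (ext_hom _ _ fun l => by
      rcases eq_or_ne l i with rfl | hl <;> simp [*, ← zpow_mul])

@[simp] theorem zpowGenerator_of_self (i : α) (e : ℤˣ) :
    zpowGenerator i e (of i) = of i ^ (e : ℤ) := by simp [zpowGenerator]

@[simp] theorem zpowGenerator_of_of_ne {i l : α} (e : ℤˣ) (hl : l ≠ i) :
    zpowGenerator i e (of l) = of l := by simp [zpowGenerator, hl]

end FreeGroup

section FreeGroupOfRankTwo

open FreeGroup Multiplicative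

local notation "F₂" => FreeGroup (Fin 2)

theorem closure_of_zero_of_one : closure {of 0, of 1} = (⊤ : Subgroup F₂) := by
  rw [← closure_range_of]
  congr
  ext; simp [Fin.exists_fin_two, eq_comm]

theorem exists_zpow_mul_zpow_eq {M : Type*} [CommGroup M] {u : F₂ →* M}
    (hu : Surjective u) (z : M) : ∃ m n : ℤ, u (of 0) ^ m * u (of 1) ^ n = z := by
  rw [← mem_closure_pair, ← Set.image_pair, ← MonoidHom.map_closure, closure_of_zero_of_one,
    map_top_of_surjective u hu]
  exact mem_top z

theorem exists_nielsenEquivalent_apply_of_one_eq_one (u : F₂ →* Multiplicative ℤ) :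
    ∃ v, NielsenEquivalent u v ∧ v (of 1) = 1 := by
  induction hN : (toAdd (u (of 1))).natAbs using Nat.strong_induction_on generalizing u with
  | _ N ih =>
  by_cases h1 : u (of 1) = 1
  · exact ⟨u, .refl u, h1⟩
  set m := toAdd (u (of 0))
  set n := toAdd (u (of 1))
  have hn : n ≠ 0 := h1
  -- one step of Euclid's algorithm: `(m, n) ↦ (n, m % n)`
  let v := (u.comp (transvection zero_ne_one (-(m / n))).toMonoidHom).comp
    (freeGroupCongr (Equiv.swap 0 1)).toMonoidHom
  have hv : toAdd (v (of 1)) = m % n := by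
    simp [v, m, n, Int.emod_def, sub_eq_add_neg, mul_comm]
  have hlt : (toAdd (v (of 1))).natAbs < N := by
    have := Int.emod_nonneg m hn
    have := Int.emod_lt_abs m hn
    rw [hv, ← hN, ← Int.natAbs_abs n]
    omega
  obtain ⟨w, hvw, hw⟩ := ih _ hlt v rfl
  exact ⟨w, ((NielsenEquivalent.comp_mulEquiv _ _).trans
    (NielsenEquivalent.comp_mulEquiv _ _)).trans hvw, hw⟩

def exponentSumFst : F₂ →* Multiplicative ℤ := lift ![ofAdd 1, 1]

def exponentSums : F₂ →* Multiplicative (ℤ × ℤ) :=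
  lift ![ofAdd (1, 0), ofAdd (0, 1)]

theorem nielsenEquivalent_exponentSumFst {u : F₂ →* Multiplicative ℤ}
    (hu : Surjective u) : NielsenEquivalent u exponentSumFst := by
  obtain ⟨v, huv, hv1⟩ := exists_nielsenEquivalent_apply_of_one_eq_one u
  obtain ⟨m, n, hmn⟩ := exists_zpow_mul_zpow_eq (huv.surjective hu) (ofAdd 1)
  rw [hv1, one_zpow, mul_one] at hmn
  have he : IsUnit (toAdd (v (of 0))) :=
    .of_mul_eq_one_right m (by simpa using congr(toAdd $hmn))
  refine huv.trans ⟨zpowGenerator 0 he.unit, ext_hom _ _ fun i => ?_⟩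
  fin_cases i
  · apply toAdd.injective
    simpa [exponentSumFst] using Int.isUnit_mul_self he
  · simp [exponentSumFst, hv1]

theorem nielsenEquivalent_exponentSums {u : F₂ →* Multiplicative (ℤ × ℤ)}
    (hu : Surjective u) : NielsenEquivalent u exponentSums := by
  let fst : Multiplicative (ℤ × ℤ) →* Multiplicative ℤ := (AddMonoidHom.fst ℤ ℤ).toMultiplicative
  have hfst : Surjective fst := fun z => ⟨ofAdd (toAdd z, 0), rfl⟩
  obtain ⟨ψ, hψ⟩ := nielsenEquivalent_exponentSumFst (u := fst.comp u) (hfst.comp hu)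
  set v := u.comp ψ.toMonoidHom
  have hv0 : (toAdd (v (of 0))).1 = 1 := congr(toAdd ($hψ (of 0)))
  have hv1 : (toAdd (v (of 1))).1 = 0 := congr(toAdd ($hψ (of 1)))
  have huv : NielsenEquivalent u v := .comp_mulEquiv u ψ
  clear_value v
  obtain ⟨m, n, hmn⟩ := exists_zpow_mul_zpow_eq (huv.surjective hu) (ofAdd (0, 1))
  have hmn' := congr(toAdd $hmn)
  simp only [toAdd_mul, toAdd_zpow, toAdd_ofAdd, Prod.ext_iff, Prod.fst_add, Prod.snd_add,
    Prod.smul_fst, Prod.smul_snd, smul_eq_mul, hv0, hv1] at hmn'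
  obtain ⟨hm, hn⟩ := hmn'
  obtain rfl : m = 0 := by simpa using hm
  have hl : IsUnit (toAdd (v (of 1))).2 := .of_mul_eq_one_right n (by simpa using hn)
  -- now `v a = (1, k)` and `v b = (0, ±1)`: finish with `a ↦ a b⁻ᵏ` and `b ↦ b^(±1)`
  refine huv.trans ⟨(transvection zero_ne_one (-(toAdd (v (of 0))).2)).trans
    (zpowGenerator 1 hl.unit), ext_hom _ _ fun i => ?_⟩
  have hl2 := Int.isUnit_mul_self hl
  apply toAdd.injective
  fin_cases i <;> simp [exponentSums, Prod.ext_iff, hv0, hv1, hl2]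

theorem ker_exponentSumFst : exponentSumFst.ker = normalClosure {(of 1 : F₂)} := by
  refine ker_eq_of_comp_eq_mk' (zpowersHom _ (QuotientGroup.mk' _ (of 0)))
    (ext_hom _ _ fun i => ?_) (normalClosure_le_normal (by simp [exponentSumFst]))
  fin_cases i
  · simp [exponentSumFst]
  · simp only [MonoidHom.comp_apply, exponentSumFst, lift_apply_of]
    exact ((QuotientGroup.eq_one_iff _).mpr (subset_normalClosure (Set.mem_singleton _))).symm

theorem ker_exponentSums :
    exponentSums.ker = normalClosure {⁅(of 0 : F₂), of 1⁆} := by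
  set N := normalClosure {⁅(of 0 : F₂), (of 1 : F₂)⁆}
  have hcomm : Commute (QuotientGroup.mk' N (of 0)) (QuotientGroup.mk' N (of 1)) := by
    rw [← commutatorElement_eq_one_iff_commute, ← map_commutatorElement, QuotientGroup.mk'_apply,
      QuotientGroup.eq_one_iff]
    exact subset_normalClosure (Set.mem_singleton _)
  let ρ : Multiplicative (ℤ × ℤ) →* F₂ ⧸ N :=
    ((zpowersHom _ (QuotientGroup.mk' N (of 0))).noncommCoprod
      (zpowersHom _ (QuotientGroup.mk' N (of 1))) fun _ _ => hcomm.zpow_zpow _ _).comp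
      (MulEquiv.prodMultiplicative ℤ ℤ).toMonoidHom
  refine ker_eq_of_comp_eq_mk' ρ (ext_hom _ _ fun i => ?_)
    (normalClosure_le_normal (by
      simp [exponentSums, commutatorElement_eq_one_iff_commute, Commute.all]))
  fin_cases i <;> simp [ρ, exponentSums]

end FreeGroupOfRankTwo

theorem exists_mulEquiv_mulEquiv_of_isMulCommutative_ker {α G Q : Type*} [Group G]
    [CommGroup Q] {A : Subgroup G} [IsMulCommutative A] (π : G →* Q) (hπ : Surjective π)
    (hπA : π.ker = A) (σ : FreeGroup α →* Q) {t : FreeGroup α} (hσ : σ.ker = normalClosure {t})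
    (hσ_nielsen : ∀ u : FreeGroup α →* Q, Surjective u → NielsenEquivalent u σ)
    {p q : FreeGroup α →* G} (hp : Surjective p) (hq : Surjective q) :
    ∃ (ψ : FreeGroup α ≃* FreeGroup α) (φ : G ≃* G), ∀ w, q w = φ (p (ψ w)) := by
  subst hπA
  obtain ⟨ψp, hψp⟩ := hσ_nielsen (π.comp p) (hπ.comp hp)
  obtain ⟨ψq, hψq⟩ := hσ_nielsen (π.comp q) (hπ.comp hq)
  have hp' : Surjective (p.comp ψp.toMonoidHom) := hp.comp ψp.surjective
  have hq' : Surjective (q.comp ψq.toMonoidHom) := hq.comp ψq.surjective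
  have hpq : π.comp (p.comp ψp.toMonoidHom) = π.comp (q.comp ψq.toMonoidHom) :=
    hψp.trans hψq.symm
  have hker : (p.comp ψp.toMonoidHom).ker = (q.comp ψq.toMonoidHom).ker :=
    le_antisymm (ker_le_ker_of_comp_eq π hp' hpq (hψp ▸ hσ))
      (ker_le_ker_of_comp_eq π hq' hpq.symm (hψq ▸ hσ))
  obtain ⟨φ, hφ⟩ := exists_mulEquiv_apply_eq_of_ker_eq hp' hq' hker
  exact ⟨ψq.symm.trans ψp, φ, fun w => by simpa using (hφ (ψq.symm w)).symm⟩

theorem aut_transitive_on_generating_pairs_general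
    {G : Type*} [Group G]
    (hcase :
      (∃ (A : Subgroup G) (_ : A.Normal), (∀ x y : A, x * y = y * x) ∧
        Nonempty ((G ⧸ A) ≃* Multiplicative ℤ)) ∨
      (⁅⁅(⊤ : Subgroup G), (⊤ : Subgroup G)⁆, ⁅(⊤ : Subgroup G), (⊤ : Subgroup G)⁆⁆
          = (⊥ : Subgroup G) ∧
        Nonempty (Abelianization G ≃* Multiplicative (ℤ × ℤ)))) :
    ∀ p q : FreeGroup (Fin 2) →* G, Function.Surjective p → Function.Surjective q →
      ∃ (ψ : FreeGroup (Fin 2) ≃* FreeGroup (Fin 2)) (φ : G ≃* G),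
        ∀ w, q w = φ (p (ψ w)) := by
  intro p q hp hq
  rcases hcase with ⟨A, _, hA, ⟨ε⟩⟩ | ⟨hA, ⟨η⟩⟩
  · have : IsMulCommutative A := ⟨⟨hA⟩⟩
    exact exists_mulEquiv_mulEquiv_of_isMulCommutative_ker
      ((ε : G ⧸ A →* _).comp (QuotientGroup.mk' A))
      (ε.surjective.comp (QuotientGroup.mk'_surjective A))
      (by rw [MonoidHom.ker_mulEquiv_comp, QuotientGroup.ker_mk']) _ ker_exponentSumFst
      (fun _ => nielsenEquivalent_exponentSumFst) hp hq
  · have : IsMulCommutative (commutator G) := by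
      rwa [← le_centralizer_iff_isMulCommutative, ← commutator_eq_bot_iff_le_centralizer]
    exact exists_mulEquiv_mulEquiv_of_isMulCommutative_ker
      ((η : Abelianization G →* _).comp Abelianization.of)
      (η.surjective.comp (QuotientGroup.mk'_surjective _))
      (by rw [MonoidHom.ker_mulEquiv_comp, Abelianization.ker_of]) _ ker_exponentSums
      (fun _ => nielsenEquivalent_exponentSums) hp hq

/-- Let `G` be a two-generated group which either has a normal abelian subgroup with
infinite cyclic quotient, or is metabelian with abelianization isomorphic to `ℤ²`.  Then
`Aut (F₂)` acts transitively on the `Aut (G)`-orbits of generating pairs: for any two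
epimorphisms `p q : F₂ → G` there are automorphisms `ψ` of `F₂` and `φ` of `G` with
`q = φ ∘ p ∘ ψ`. -/
theorem aut_transitive_on_generating_pairs
    {G : Type*} [Group G]
    (hgen : ∃ p : FreeGroup (Fin 2) →* G, Function.Surjective p)
    (hcase :
      (∃ (A : Subgroup G) (_ : A.Normal), (∀ x y : A, x * y = y * x) ∧
        Nonempty ((G ⧸ A) ≃* Multiplicative ℤ)) ∨
      (⁅⁅(⊤ : Subgroup G), (⊤ : Subgroup G)⁆, ⁅(⊤ : Subgroup G), (⊤ : Subgroup G)⁆⁆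
          = (⊥ : Subgroup G) ∧
        Nonempty (Abelianization G ≃* Multiplicative (ℤ × ℤ)))) :
    ∀ p q : FreeGroup (Fin 2) →* G, Function.Surjective p → Function.Surjective q →
      ∃ (ψ : FreeGroup (Fin 2) ≃* FreeGroup (Fin 2)) (φ : G ≃* G),
        ∀ w, q w = φ (p (ψ w)) :=
  aut_transitive_on_generating_pairs_general hcase
end
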